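/- arXiv:2201.01670 — 11 statements merged into one kernel-verified Lean document; each statement's English description precedes it below -/
import Mathlib

section
/- Let 𝒜 be an NFH over Σ with variable set X, quantifier prefix α and underlying NFA Â over Σ̂. Let B be any NFA over Σ̂ whose language is the complement Σ̂* \ L(Â), and let ᾱ be the quantifier prefix obtained from α by replacing every ∃ with ∀ and every ∀ with ∃. Then for every nonempty hyperword S over Σ, the NFH (Σ, X, B, ᾱ) accepts S if and only if 𝒜 does not accept S. -/
/-- Quantifiers for NFH quantifier prefixes. -/
inductive Quant | ex | all

/-- The word assignment `w_v` over the extended alphabet `X → Option σ` (where `none` is the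
padding symbol `#`) induced by an assignment `v : X → Σ*`: its length is the maximum of the
lengths of the assigned words, and its `i`-th letter sends `x` to the `i`-th letter of `v x`
(or to `#` if `v x` is too short). -/
def wordAssign {σ X : Type} [Fintype X] (v : X → List σ) : List (X → Option σ) :=
  (List.range (Finset.univ.sup fun x : X => (v x).length)).map (fun i x => (v x)[i]?)

/-- Satisfaction of a quantifier prefix over a language `L` of word assignments, relative to a
hyperword `S` and an assignment `v`. -/
def HSat {σ X : Type} [Fintype X] [DecidableEq X] (L : Language (X → Option σ)) :
    List (Quant × X) → Set (List σ) → (X → List σ) → Prop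
  | [], _, v => wordAssign v ∈ L
  | (Quant.ex, x) :: qs, S, v => ∃ w ∈ S, HSat L qs S (Function.update v x w)
  | (Quant.all, x) :: qs, S, v => ∀ w ∈ S, HSat L qs S (Function.update v x w)

/-- A hyperword `S` is accepted (the prefix binds all variables, so the initial assignment is
irrelevant; we use the all-empty assignment). -/
def HAccepts {σ X : Type} [Fintype X] [DecidableEq X] (L : Language (X → Option σ))
    (qs : List (Quant × X)) (S : Set (List σ)) : Prop :=
  HSat L qs S (fun _ => [])

/-- The hyperlanguage: all nonempty accepted hyperwords. -/
def HLang {σ X : Type} [Fintype X] [DecidableEq X] (L : Language (X → Option σ))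
    (qs : List (Quant × X)) : Set (Set (List σ)) :=
  {S | S.Nonempty ∧ HAccepts L qs S}

/-- The quantifier prefix binds each variable of `X` exactly once. -/
def Binds {X : Type} (qs : List (Quant × X)) : Prop :=
  (qs.map Prod.snd).Nodup ∧ ∀ x : X, x ∈ qs.map Prod.snd

/-- Dualizing a quantifier. -/
def Quant.dual : Quant → Quant
  | Quant.ex => Quant.all
  | Quant.all => Quant.ex


theorem hsat_dual {σ X : Type} [Fintype X] [DecidableEq X]
    (L L' : Language (X → Option σ)) (hL : ∀ w, w ∈ L' ↔ w ∉ L) :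
    ∀ (qs : List (Quant × X)) (S : Set (List σ)) (v : X → List σ),
      HSat L' (qs.map fun p => (p.1.dual, p.2)) S v ↔ ¬ HSat L qs S v := by
  intro qs
  induction qs with
  | nil => intro S v; exact hL _
  | cons p qs ih =>
      obtain ⟨q, x⟩ := p
      intro S v
      cases q with
      | ex =>
          simp only [List.map_cons, Quant.dual, HSat]
          constructor
          · intro h ⟨w, hw, hs⟩
            exact ((ih S _).mp (h w hw)) hs
          · intro h w hw
            exact (ih S _).mpr fun hs => h ⟨w, hw, hs⟩
      | all =>
          simp only [List.map_cons, Quant.dual, HSat]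
          constructor
          · intro ⟨w, hw, h⟩ hall
            exact ((ih S _).mp h) (hall w hw)
          · intro h
            by_contra hc
            push_neg at hc
            exact h fun w hw => not_not.mp fun hn => (hc w hw) ((ih S _).mpr hn)

/-- If `B` is an NFA whose language is the complement of the language of the
underlying NFA of the NFH `(A, qs)`, and `qs.dual` is obtained from `qs` by swapping ∃ and ∀,
then for every nonempty hyperword `S`, the NFH `(B, dual qs)` accepts `S` iff `(A, qs)` does
not accept `S`. -/
theorem nfh_complement_accepts {σ X Q Q' : Type} [Fintype X] [DecidableEq X]
    [Fintype Q] [Fintype Q']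
    (A : NFA (X → Option σ) Q) (B : NFA (X → Option σ) Q')
    (qs : List (Quant × X)) (hbind : Binds qs)
    (hB : ∀ w : List (X → Option σ), w ∈ B.accepts ↔ w ∉ A.accepts)
    (S : Set (List σ)) (hS : S.Nonempty) :
    HAccepts B.accepts (qs.map fun p => (p.1.dual, p.2)) S ↔ ¬ HAccepts A.accepts qs S := by
  exact hsat_dual A.accepts B.accepts hB qs S _
end

section
/- Regular hyperlanguages are closed under complementation: for every NFH 𝒜 over Σ there exists an NFH 𝒜′ over Σ with the same variable set X such that for every nonempty hyperword S over Σ, S ∈ 𝔏(𝒜′) if and only if S ∉ 𝔏(𝒜). -/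

def dualQ : Quant → Quant
  | Quant.ex => Quant.all
  | Quant.all => Quant.ex

def dualP {X : Type} (p : Quant × X) : Quant × X := (dualQ p.1, p.2)

lemma dualP_ex {X : Type} (x : X) : dualP (Quant.ex, x) = (Quant.all, x) := rfl
lemma dualP_all {X : Type} (x : X) : dualP (Quant.all, x) = (Quant.ex, x) := rfl

lemma hsat_compl {σ X : Type} [Fintype X] [DecidableEq X] (L : Language (X → Option σ))
    (qs : List (Quant × X)) (S : Set (List σ)) (v : X → List σ) :
    HSat (Lᶜ : Language (X → Option σ)) (qs.map dualP) S v ↔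
      ¬ HSat L qs S v := by
  induction qs generalizing v with
  | nil => exact Iff.rfl
  | cons p rest ih =>
    obtain ⟨q, x⟩ := p
    cases q with
    | ex =>
      simp only [List.map_cons, dualP_ex, HSat, ih]
      push_neg
      rfl
    | all =>
      simp only [List.map_cons, dualP_all, HSat, ih]
      push_neg
      rfl

/-- Closure under complementation: for every NFH `(A, qs)` over `Σ` with variable
set `X`, there is an NFH `(B, qs')` with the same variable set such that for every nonempty
hyperword `S`, `S ∈ 𝔏(B, qs')` iff `S ∉ 𝔏(A, qs)`. -/
theorem nfh_closure_complement {σ X Q : Type} [Fintype X] [DecidableEq X] [Fintype Q]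
    (A : NFA (X → Option σ) Q) (qs : List (Quant × X)) (hbind : Binds qs) :
    ∃ (Q' : Type) (_ : Fintype Q') (B : NFA (X → Option σ) Q') (qs' : List (Quant × X)),
      Binds qs' ∧
      ∀ S : Set (List σ), S.Nonempty →
        (S ∈ HLang B.accepts qs' ↔ S ∉ HLang A.accepts qs) := by
  classical
  let D := A.toDFA
  let D' : DFA (X → Option σ) (Set Q) := ⟨D.step, D.start, D.acceptᶜ⟩
  have hB : D'.toNFA.accepts = (A.accepts)ᶜ := by
    ext x
    have h1 : x ∈ D'.toNFA.accepts ↔ x ∈ D'.accepts := by rw [DFA.toNFA_correct]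
    have h2 : D'.eval x = D.eval x := rfl
    have h3 : x ∈ D.accepts ↔ x ∈ A.accepts := by rw [NFA.toDFA_correct]
    simp only [h1, DFA.mem_accepts, h2, Set.mem_compl_iff]
    change ¬ (D.eval x ∈ D.accept) ↔ ¬ (x ∈ A.accepts)
    rw [← DFA.mem_accepts, h3]
  refine ⟨Set Q, inferInstance, D'.toNFA, qs.map dualP, ?_, ?_⟩
  · obtain ⟨h1, h2⟩ := hbind
    constructor
    · simpa [dualP, Function.comp_def] using h1
    · intro x; simpa [dualP] using h2 x
  · intro S hS
    simp only [HLang, Set.mem_setOf_eq, HAccepts, hB, hsat_compl, Set.mem_compl_iff]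
    constructor
    · rintro ⟨_, h⟩ hc; exact h hc.2
    · intro h; exact ⟨hS, fun hc => h ⟨hS, hc⟩⟩
end

section
/- Regular hyperlanguages are closed under intersection: for all NFH 𝒜₁ over Σ with variable set X and quantifier prefix α₁, and 𝒜₂ over Σ with variable set Y and quantifier prefix α₂, where X and Y are disjoint, there exists an NFH 𝒜∩ over Σ with variable set X ∪ Y and quantifier prefix α₁α₂ (the concatenation of the two prefixes) such that 𝔏(𝒜∩) = 𝔏(𝒜₁) ∩ 𝔏(𝒜₂). -/
namespace NFHInter

open Sum

variable {σ X Y : Type}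

/-- Pad an NFA so it additionally accepts words followed by all-`#` padding letters
(only when the padding is pure: inside the original word no all-`#` letter is read). -/
def padNFA {Q : Type} (A : NFA (X → Option σ) Q) : NFA (X → Option σ) (Option Q) where
  step s a :=
    match s with
    | some q => {t | (a = (fun _ => none) ∧ q ∈ A.accept ∧ t = none) ∨
        ((a ≠ fun _ => none) ∧ ∃ q' ∈ A.step q a, t = some q')}
    | none => {t | (a = fun _ => none) ∧ t = none}
  start := some '' A.start
  accept := some '' A.accept ∪ {none}

lemma padNFA_evalFrom {Q : Type} (A : NFA (X → Option σ) Q) (W : List (X → Option σ))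
    (hW : ∀ a ∈ W, a ≠ fun _ => none) (S : Set Q) :
    (padNFA A).evalFrom (some '' S) W = some '' A.evalFrom S W := by
  induction W generalizing S with
  | nil => rfl
  | cons a W ih =>
    have ha : a ≠ fun _ => none := hW a (by simp)
    have h1 : (padNFA A).stepSet (some '' S) a = some '' A.stepSet S a := by
      ext t
      simp only [NFA.mem_stepSet, Set.mem_image]
      constructor
      · rintro ⟨s, ⟨q, hq, rfl⟩, ht⟩
        rcases ht with ⟨h, _, _⟩ | ⟨_, q', hq', rfl⟩
        · exact absurd h ha
        · exact ⟨q', ⟨q, hq, hq'⟩, rfl⟩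
      · rintro ⟨q', ⟨q, hq, hstep⟩, rfl⟩
        exact ⟨some q, ⟨q, hq, rfl⟩, Or.inr ⟨ha, q', hstep, rfl⟩⟩
    show (padNFA A).evalFrom ((padNFA A).stepSet (some '' S) a) W = _
    rw [h1, ih (fun b hb => hW b (by simp [hb]))]
    rfl

lemma padNFA_replicate {Q : Type} (A : NFA (X → Option σ) Q) (d : ℕ) (T : Set (Option Q)) :
    (∃ t ∈ (padNFA A).accept, t ∈ (padNFA A).evalFrom T
        (List.replicate d (fun _ => none))) ↔
      ∃ t ∈ (padNFA A).accept, t ∈ T := by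
  induction d generalizing T with
  | zero => rfl
  | succ d ih =>
    rw [List.replicate_succ]
    show (∃ t ∈ _, t ∈ (padNFA A).evalFrom ((padNFA A).stepSet T _) _) ↔ _
    rw [ih]
    constructor
    · rintro ⟨t, htacc, ht⟩
      obtain ⟨s, hs, hstep⟩ := (NFA.mem_stepSet ..).mp ht
      match s, hstep with
      | some q, hstep =>
        rcases hstep with ⟨_, hq, rfl⟩ | ⟨h, _⟩
        · exact ⟨some q, Or.inl ⟨q, hq, rfl⟩, hs⟩
        · exact absurd rfl h
      | none, hstep => exact ⟨none, Or.inr rfl, hs⟩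
    · rintro ⟨t, ht, hT⟩
      refine ⟨none, Or.inr rfl, (NFA.mem_stepSet ..).mpr ⟨t, hT, ?_⟩⟩
      match t, ht with
      | some q, ht =>
        rcases ht with ⟨q', hq', h⟩ | h
        · obtain rfl : q' = q := Option.some_injective _ h
          exact Or.inl ⟨rfl, hq', rfl⟩
        · exact absurd h (by simp)
      | none, _ => exact ⟨rfl, rfl⟩

lemma padNFA_accepts {Q : Type} (A : NFA (X → Option σ) Q) (W : List (X → Option σ))
    (hW : ∀ a ∈ W, a ≠ fun _ => none) (d : ℕ) :
    (W ++ List.replicate d (fun _ => none)) ∈ (padNFA A).accepts ↔ W ∈ A.accepts := by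
  rw [NFA.mem_accepts, NFA.mem_accepts]
  have : (padNFA A).evalFrom (padNFA A).start (W ++ List.replicate d (fun _ => none))
      = (padNFA A).evalFrom ((padNFA A).evalFrom (padNFA A).start W)
          (List.replicate d (fun _ => none)) := List.foldl_append ..
  rw [this]
  rw [padNFA_replicate]
  have : (padNFA A).evalFrom (padNFA A).start W = some '' A.evalFrom A.start W :=
    padNFA_evalFrom A W hW A.start
  rw [this]
  constructor
  · rintro ⟨t, ht, q, hq, rfl⟩
    rcases ht with ⟨q', hq', h⟩ | h
    · obtain rfl : q' = q := Option.some_injective _ h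
      exact ⟨_, hq', hq⟩
    · exact absurd h (by simp)
  · rintro ⟨q, hq, hq'⟩
    exact ⟨some q, Or.inl ⟨q, hq, rfl⟩, q, hq', rfl⟩

/-- Product automaton reading both projections simultaneously. -/
def prodNFA {Q₁ Q₂ : Type} (A : NFA (X → Option σ) Q₁) (B : NFA (Y → Option σ) Q₂) :
    NFA ((X ⊕ Y) → Option σ) (Q₁ × Q₂) where
  step s a := (A.step s.1 fun x => a (.inl x)) ×ˢ (B.step s.2 fun y => a (.inr y))
  start := A.start ×ˢ B.start
  accept := A.accept ×ˢ B.accept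

lemma prodNFA_evalFrom {Q₁ Q₂ : Type} (A : NFA (X → Option σ) Q₁)
    (B : NFA (Y → Option σ) Q₂) (w : List ((X ⊕ Y) → Option σ)) (S : Set Q₁) (T : Set Q₂) :
    (prodNFA A B).evalFrom (S ×ˢ T) w =
      A.evalFrom S (w.map fun a x => a (.inl x)) ×ˢ
        B.evalFrom T (w.map fun a y => a (.inr y)) := by
  induction w generalizing S T with
  | nil => rfl
  | cons a w ih =>
    have h1 : (prodNFA A B).stepSet (S ×ˢ T) a =
        (A.stepSet S fun x => a (.inl x)) ×ˢ (B.stepSet T fun y => a (.inr y)) := by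
      ext ⟨p, q⟩
      simp only [NFA.mem_stepSet, Set.mem_prod, prodNFA]
      constructor
      · rintro ⟨⟨s, t⟩, ⟨hs, ht⟩, hp, hq⟩
        exact ⟨⟨s, hs, hp⟩, ⟨t, ht, hq⟩⟩
      · rintro ⟨⟨s, hs, hp⟩, ⟨t, ht, hq⟩⟩
        exact ⟨⟨s, t⟩, ⟨hs, ht⟩, hp, hq⟩
    show (prodNFA A B).evalFrom ((prodNFA A B).stepSet (S ×ˢ T) a) w = _
    rw [h1, ih]
    rfl

lemma prodNFA_accepts {Q₁ Q₂ : Type} (A : NFA (X → Option σ) Q₁)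
    (B : NFA (Y → Option σ) Q₂) (w : List ((X ⊕ Y) → Option σ)) :
    w ∈ (prodNFA A B).accepts ↔
      (w.map fun a x => a (.inl x)) ∈ A.accepts ∧
        (w.map fun a y => a (.inr y)) ∈ B.accepts := by
  rw [NFA.mem_accepts, NFA.mem_accepts, NFA.mem_accepts]
  have : (prodNFA A B).evalFrom (prodNFA A B).start w =
      A.evalFrom A.start (w.map fun a x => a (.inl x)) ×ˢ
        B.evalFrom B.start (w.map fun a y => a (.inr y)) := prodNFA_evalFrom ..
  rw [this]
  constructor
  · rintro ⟨⟨p, q⟩, ⟨hp, hq⟩, hp', hq'⟩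
    exact ⟨⟨p, hp, hp'⟩, ⟨q, hq, hq'⟩⟩
  · rintro ⟨⟨p, hp, hp'⟩, ⟨q, hq, hq'⟩⟩
    exact ⟨⟨p, q⟩, ⟨hp, hq⟩, hp', hq'⟩

lemma wordAssign_ne_pad [Fintype X] (v : X → List σ) :
    ∀ a ∈ wordAssign v, a ≠ fun _ => none := by
  intro a ha
  simp only [wordAssign, List.mem_map, List.mem_range] at ha
  obtain ⟨i, hi, rfl⟩ := ha
  obtain ⟨x, -, hx⟩ := Finset.lt_sup_iff.mp hi
  intro heq
  have := congrFun heq x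
  simp [List.getElem?_eq_getElem hx] at this

lemma wordAssign_map_left [Fintype X] [Fintype Y] (v : X ⊕ Y → List σ) :
    (wordAssign v).map (fun a x => a (Sum.inl x)) =
      wordAssign (v ∘ Sum.inl) ++
        List.replicate ((Finset.univ.sup fun z : X ⊕ Y => (v z).length)
          - (Finset.univ.sup fun x : X => ((v ∘ Sum.inl) x).length)) (fun _ => none) := by
  set N := Finset.univ.sup fun z : X ⊕ Y => (v z).length with hN
  set N₁ := Finset.univ.sup fun x : X => ((v ∘ Sum.inl) x).length with hN₁
  have hle : N₁ ≤ N := Finset.sup_le fun x _ =>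
    Finset.le_sup (f := fun z : X ⊕ Y => (v z).length) (Finset.mem_univ (Sum.inl x))
  have hsplit : N = N₁ + (N - N₁) := (Nat.add_sub_cancel' hle).symm
  unfold wordAssign
  rw [List.map_map, ← hN, ← hN₁, hsplit, List.range_add, List.map_append, List.map_map]
  congr 1
  have hmem : ∀ b ∈ (List.range (N - N₁)).map
        (((fun (a : X ⊕ Y → Option σ) (x : X) => a (Sum.inl x)) ∘
          fun i z => (v z)[i]?) ∘ (N₁ + ·)), b = fun _ => none := by
      rintro b hb
      simp only [List.mem_map, List.mem_range, Function.comp] at hb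
      obtain ⟨i, hi, rfl⟩ := hb
      funext x
      apply List.getElem?_eq_none
      calc (v (Sum.inl x)).length ≤ N₁ :=
            Finset.le_sup (f := fun x : X => ((v ∘ Sum.inl) x).length) (Finset.mem_univ x)
        _ ≤ N₁ + i := Nat.le_add_right ..
  rw [List.eq_replicate_length.mpr hmem]
  simp

lemma wordAssign_map_right [Fintype X] [Fintype Y] (v : X ⊕ Y → List σ) :
    (wordAssign v).map (fun a y => a (Sum.inr y)) =
      wordAssign (v ∘ Sum.inr) ++
        List.replicate ((Finset.univ.sup fun z : X ⊕ Y => (v z).length)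
          - (Finset.univ.sup fun y : Y => ((v ∘ Sum.inr) y).length)) (fun _ => none) := by
  set N := Finset.univ.sup fun z : X ⊕ Y => (v z).length with hN
  set N₂ := Finset.univ.sup fun y : Y => ((v ∘ Sum.inr) y).length with hN₂
  have hle : N₂ ≤ N := Finset.sup_le fun y _ =>
    Finset.le_sup (f := fun z : X ⊕ Y => (v z).length) (Finset.mem_univ (Sum.inr y))
  have hsplit : N = N₂ + (N - N₂) := (Nat.add_sub_cancel' hle).symm
  unfold wordAssign
  rw [List.map_map, ← hN, ← hN₂, hsplit, List.range_add, List.map_append, List.map_map]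
  congr 1
  have hmem : ∀ b ∈ (List.range (N - N₂)).map
        (((fun (a : X ⊕ Y → Option σ) (y : Y) => a (Sum.inr y)) ∘
          fun i z => (v z)[i]?) ∘ (N₂ + ·)), b = fun _ => none := by
      rintro b hb
      simp only [List.mem_map, List.mem_range, Function.comp] at hb
      obtain ⟨i, hi, rfl⟩ := hb
      funext y
      apply List.getElem?_eq_none
      calc (v (Sum.inr y)).length ≤ N₂ :=
            Finset.le_sup (f := fun y : Y => ((v ∘ Sum.inr) y).length) (Finset.mem_univ y)
        _ ≤ N₂ + i := Nat.le_add_right ..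
  rw [List.eq_replicate_length.mpr hmem]
  simp

lemma key [Fintype X] [Fintype Y] {Q₁ Q₂ : Type}
    (A₁ : NFA (X → Option σ) Q₁) (A₂ : NFA (Y → Option σ) Q₂) (v : X ⊕ Y → List σ) :
    wordAssign v ∈ (prodNFA (padNFA A₁) (padNFA A₂)).accepts ↔
      wordAssign (v ∘ Sum.inl) ∈ A₁.accepts ∧ wordAssign (v ∘ Sum.inr) ∈ A₂.accepts := by
  rw [prodNFA_accepts, wordAssign_map_left, wordAssign_map_right,
    padNFA_accepts A₁ _ (wordAssign_ne_pad _), padNFA_accepts A₂ _ (wordAssign_ne_pad _)]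

lemma update_inr_comp_inl [DecidableEq X] [DecidableEq Y] (v : X ⊕ Y → List σ) (y : Y)
    (w : List σ) : (Function.update v (Sum.inr y) w) ∘ Sum.inl = v ∘ Sum.inl := by
  funext x
  exact Function.update_of_ne (by simp) _ _

lemma update_inl_comp_inr [DecidableEq X] [DecidableEq Y] (v : X ⊕ Y → List σ) (x : X)
    (w : List σ) : (Function.update v (Sum.inl x) w) ∘ Sum.inr = v ∘ Sum.inr := by
  funext y
  exact Function.update_of_ne (by simp) _ _

lemma update_inr_comp_inr [DecidableEq X] [DecidableEq Y] (v : X ⊕ Y → List σ) (y : Y)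
    (w : List σ) :
    (Function.update v (Sum.inr y) w) ∘ Sum.inr = Function.update (v ∘ Sum.inr) y w := by
  funext y'
  by_cases h : y' = y
  · subst h; simp
  · simp only [Function.comp_apply]
    rw [Function.update_of_ne h, Function.update_of_ne (by simp [h])]
    rfl

lemma update_inl_comp_inl [DecidableEq X] [DecidableEq Y] (v : X ⊕ Y → List σ) (x : X)
    (w : List σ) :
    (Function.update v (Sum.inl x) w) ∘ Sum.inl = Function.update (v ∘ Sum.inl) x w := by
  funext x'
  by_cases h : x' = x
  · subst h; simp
  · simp only [Function.comp_apply]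
    rw [Function.update_of_ne h, Function.update_of_ne (by simp [h])]
    rfl

lemma hsat_right [Fintype X] [DecidableEq X] [Fintype Y] [DecidableEq Y] {Q₁ Q₂ : Type}
    (A₁ : NFA (X → Option σ) Q₁) (A₂ : NFA (Y → Option σ) Q₂)
    (qs₂ : List (Quant × Y)) (S : Set (List σ)) (hS : S.Nonempty) :
    ∀ v : X ⊕ Y → List σ,
      HSat (prodNFA (padNFA A₁) (padNFA A₂)).accepts
          (qs₂.map fun p => (p.1, Sum.inr p.2)) S v ↔
        (wordAssign (v ∘ Sum.inl) ∈ A₁.accepts ∧ HSat A₂.accepts qs₂ S (v ∘ Sum.inr)) := by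
  induction qs₂ with
  | nil => intro v; simpa [HSat] using key A₁ A₂ v
  | cons p qs ih =>
    intro v
    obtain ⟨q, y⟩ := p
    cases q with
    | ex =>
      simp only [List.map_cons, HSat]
      constructor
      · rintro ⟨w, hw, h⟩
        rw [ih] at h
        rw [update_inr_comp_inl, update_inr_comp_inr] at h
        exact ⟨h.1, w, hw, h.2⟩
      · rintro ⟨h1, w, hw, h2⟩
        refine ⟨w, hw, ?_⟩
        rw [ih, update_inr_comp_inl, update_inr_comp_inr]
        exact ⟨h1, h2⟩
    | all =>
      simp only [List.map_cons, HSat]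
      constructor
      · intro h
        obtain ⟨w₀, hw₀⟩ := hS
        have h0 := h w₀ hw₀
        rw [ih, update_inr_comp_inl] at h0
        refine ⟨h0.1, fun w hw => ?_⟩
        have hw' := h w hw
        rw [ih, update_inr_comp_inr] at hw'
        exact hw'.2
      · rintro ⟨h1, h2⟩ w hw
        rw [ih, update_inr_comp_inl, update_inr_comp_inr]
        exact ⟨h1, h2 w hw⟩

lemma hsat_left [Fintype X] [DecidableEq X] [Fintype Y] [DecidableEq Y] {Q₁ Q₂ : Type}
    (A₁ : NFA (X → Option σ) Q₁) (A₂ : NFA (Y → Option σ) Q₂)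
    (qs₁ : List (Quant × X)) (qs₂ : List (Quant × Y)) (S : Set (List σ)) (hS : S.Nonempty) :
    ∀ v : X ⊕ Y → List σ,
      HSat (prodNFA (padNFA A₁) (padNFA A₂)).accepts
          ((qs₁.map fun p => (p.1, Sum.inl p.2)) ++ qs₂.map fun p => (p.1, Sum.inr p.2)) S v ↔
        (HSat A₁.accepts qs₁ S (v ∘ Sum.inl) ∧ HSat A₂.accepts qs₂ S (v ∘ Sum.inr)) := by
  induction qs₁ with
  | nil => simpa [HSat] using hsat_right A₁ A₂ qs₂ S hS
  | cons p qs ih =>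
    intro v
    obtain ⟨q, x⟩ := p
    cases q with
    | ex =>
      simp only [List.map_cons, List.cons_append, HSat, List.append_eq]
      constructor
      · rintro ⟨w, hw, h⟩
        rw [ih] at h
        rw [update_inl_comp_inl, update_inl_comp_inr] at h
        exact ⟨⟨w, hw, h.1⟩, h.2⟩
      · rintro ⟨⟨w, hw, h1⟩, h2⟩
        refine ⟨w, hw, ?_⟩
        rw [ih, update_inl_comp_inl, update_inl_comp_inr]
        exact ⟨h1, h2⟩
    | all =>
      simp only [List.map_cons, List.cons_append, HSat, List.append_eq]
      constructor
      · intro h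
        obtain ⟨w₀, hw₀⟩ := hS
        have h0 := h w₀ hw₀
        rw [ih, update_inl_comp_inr] at h0
        refine ⟨fun w hw => ?_, h0.2⟩
        have hw' := h w hw
        rw [ih, update_inl_comp_inl] at hw'
        exact hw'.1
      · rintro ⟨h1, h2⟩ w hw
        rw [ih, update_inl_comp_inl, update_inl_comp_inr]
        exact ⟨h1 w hw, h2⟩

end NFHInter

/-- Closure under intersection: for NFH `(A₁, qs₁)` over variables `X` and
`(A₂, qs₂)` over variables `Y` (disjoint, modeled by the sum type `X ⊕ Y`), there is an NFH
over `X ⊕ Y` with quantifier prefix the concatenation `qs₁ · qs₂` whose hyperlanguage is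
`𝔏(A₁, qs₁) ∩ 𝔏(A₂, qs₂)`. -/
theorem nfh_closure_inter {σ X Y Q₁ Q₂ : Type}
    [Fintype X] [DecidableEq X] [Fintype Y] [DecidableEq Y] [Fintype Q₁] [Fintype Q₂]
    (A₁ : NFA (X → Option σ) Q₁) (qs₁ : List (Quant × X)) (h₁ : Binds qs₁)
    (A₂ : NFA (Y → Option σ) Q₂) (qs₂ : List (Quant × Y)) (h₂ : Binds qs₂) :
    ∃ (Q' : Type) (_ : Fintype Q') (B : NFA ((X ⊕ Y) → Option σ) Q'),
      HLang B.accepts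
          (qs₁.map (fun p => (p.1, Sum.inl p.2)) ++ qs₂.map (fun p => (p.1, Sum.inr p.2)))
        = HLang A₁.accepts qs₁ ∩ HLang A₂.accepts qs₂ := by
  classical
  refine ⟨Option Q₁ × Option Q₂, inferInstance,
    NFHInter.prodNFA (NFHInter.padNFA A₁) (NFHInter.padNFA A₂), ?_⟩
  ext S
  simp only [HLang, HAccepts, Set.mem_setOf_eq, Set.mem_inter_iff]
  constructor
  · rintro ⟨hS, h⟩
    have h' := (NFHInter.hsat_left A₁ A₂ qs₁ qs₂ S hS (fun _ => [])).mp h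
    exact ⟨⟨hS, h'.1⟩, ⟨hS, h'.2⟩⟩
  · rintro ⟨⟨hS, hl⟩, ⟨-, hr⟩⟩
    exact ⟨hS, (NFHInter.hsat_left A₁ A₂ qs₁ qs₂ S hS (fun _ => [])).mpr ⟨hl, hr⟩⟩
end

section
/- Let 𝒜 be an NFH over Σ whose quantifier prefix consists only of universal quantifiers (an NFH_∀). Then: (i) if 𝒜 accepts a hyperword S and u ∈ S, then 𝒜 accepts the singleton hyperword {u}; and consequently (ii) 𝔏(𝒜) ≠ ∅ if and only if 𝒜 accepts {u} for some word u ∈ Σ*. -/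
lemma hsat_mono {σ X : Type} [Fintype X] [DecidableEq X] (L : Language (X → Option σ)) :
    ∀ (qs : List (Quant × X)), (∀ p ∈ qs, p.1 = Quant.all) →
      ∀ (S T : Set (List σ)) (v : X → List σ), T ⊆ S → HSat L qs S v → HSat L qs T v
  | [], _, _, _, _, _, h => h
  | (q, x) :: qs, hall, S, T, v, hsub, h => by
    have hq : q = Quant.all := hall (q, x) List.mem_cons_self
    subst hq
    intro w hw
    exact hsat_mono L qs (fun p hp => hall p (List.mem_cons_of_mem _ hp)) S T _ hsub
      (h w (hsub hw))

/-- For an NFH whose quantifier prefix is purely universal: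
(i) if it accepts a hyperword `S` and `u ∈ S`, then it accepts the singleton `{u}`;
(ii) its hyperlanguage is nonempty iff it accepts `{u}` for some word `u`. -/
theorem nfh_forall_nonemptiness {σ X Q : Type} [Fintype X] [DecidableEq X]
    [Fintype Q] (A : NFA (X → Option σ) Q)
    (qs : List (Quant × X)) (hbind : Binds qs) (hall : ∀ p ∈ qs, p.1 = Quant.all) :
    (∀ (S : Set (List σ)) (u : List σ),
        HAccepts A.accepts qs S → u ∈ S → HAccepts A.accepts qs {u}) ∧
      ((HLang A.accepts qs).Nonempty ↔ ∃ u : List σ, HAccepts A.accepts qs {u}) := by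
  have key : ∀ (S : Set (List σ)) (u : List σ),
      HAccepts A.accepts qs S → u ∈ S → HAccepts A.accepts qs {u} := by
    intro S u hS hu
    exact hsat_mono _ qs hall S {u} _ (by simpa using hu) hS
  refine ⟨key, ?_, ?_⟩
  · rintro ⟨S, ⟨u, hu⟩, hS⟩
    exact ⟨u, key S u hS hu⟩
  · rintro ⟨u, hu⟩
    exact ⟨{u}, ⟨u, rfl⟩, hu⟩
end

section
/- Small-model property for NFH_∃∀: let 𝒜 be an NFH over Σ with quantifier prefix ∃x₁…∃x_m ∀x_{m+1}…∀x_k (m ≥ 1). Then 𝔏(𝒜) ≠ ∅ if and only if 𝒜 accepts some nonempty hyperword S of cardinality at most m. -/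
/-- The quantifier prefix `∃x₁…∃x_m ∀x_{m+1}…∀x_k` over the variable set `Fin k`. -/
def efPrefix (k m : ℕ) : List (Quant × Fin k) :=
  (List.finRange k).map fun i => (if i.1 < m then Quant.ex else Quant.all, i)

lemma hsat_mono_all {σ X : Type} [Fintype X] [DecidableEq X] (L : Language (X → Option σ))
    (qs : List (Quant × X)) (hq : ∀ q ∈ qs, q.1 = Quant.all) :
    ∀ (S S' : Set (List σ)) (v : X → List σ), S' ⊆ S → HSat L qs S v → HSat L qs S' v := by
  induction qs with
  | nil => intro S S' v _ h; exact h
  | cons q qs ih =>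
    intro S S' v hsub h
    obtain ⟨q1, x⟩ := q
    have hq1 : q1 = Quant.all := hq _ List.mem_cons_self
    subst hq1
    simp only [HSat] at h ⊢
    intro w hw
    exact ih (fun q hq' => hq _ (List.mem_cons_of_mem _ hq')) S S' _ hsub (h w (hsub hw))

lemma hsat_small {σ X : Type} [Fintype X] [DecidableEq X] (L : Language (X → Option σ))
    (exs : List (Quant × X)) (hex : ∀ q ∈ exs, q.1 = Quant.ex)
    (alls : List (Quant × X)) (hall : ∀ q ∈ alls, q.1 = Quant.all) :
    ∀ (S : Set (List σ)) (v : X → List σ), HSat L (exs ++ alls) S v →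
      ∃ T ⊆ S, T.Finite ∧ T.ncard ≤ exs.length ∧
        ∀ T', T ⊆ T' → T' ⊆ S → HSat L (exs ++ alls) T' v := by
  induction exs with
  | nil =>
    intro S v h
    exact ⟨∅, Set.empty_subset S, Set.finite_empty, by simp,
      fun T' _ hT'S => hsat_mono_all L alls hall S T' v hT'S h⟩
  | cons q exs ih =>
    intro S v h
    obtain ⟨q1, x⟩ := q
    have hq1 : q1 = Quant.ex := hex _ List.mem_cons_self
    subst hq1
    simp only [List.cons_append, HSat] at h
    obtain ⟨w, hwS, hsat⟩ := h
    obtain ⟨T, hTS, hTfin, hTcard, hT⟩ :=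
      ih (fun q hq => hex _ (List.mem_cons_of_mem _ hq)) S _ hsat
    refine ⟨insert w T, Set.insert_subset hwS hTS, hTfin.insert w, ?_, ?_⟩
    · calc (insert w T).ncard ≤ T.ncard + 1 := Set.ncard_insert_le w T
        _ ≤ exs.length + 1 := by omega
    · intro T' hTT' hT'S
      simp only [List.cons_append, HSat]
      exact ⟨w, hTT' (Set.mem_insert w T),
        hT T' ((Set.subset_insert w T).trans hTT') hT'S⟩

lemma efPrefix_take_ex (k m : ℕ) : ∀ q ∈ (efPrefix k m).take m, q.1 = Quant.ex := by
  intro q hq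
  obtain ⟨i, hi, rfl⟩ := List.getElem_of_mem hq
  have hil : i < m := lt_of_lt_of_le hi (by simp [List.length_take])
  simp [efPrefix, List.getElem_take, hil]

lemma efPrefix_drop_all (k m : ℕ) : ∀ q ∈ (efPrefix k m).drop m, q.1 = Quant.all := by
  intro q hq
  obtain ⟨i, hi, rfl⟩ := List.getElem_of_mem hq
  rw [List.getElem_drop]
  have : ¬ (m + i < m) := by omega
  simp [efPrefix, this]

/-- Small-model property for NFH_∃∀: an NFH with quantifier prefix
`∃x₁…∃x_m ∀x_{m+1}…∀x_k` (with `m ≥ 1`) has a nonempty hyperlanguage iff it accepts some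
nonempty hyperword of cardinality at most `m`. -/
theorem nfh_ef_small_model {σ Q : Type} [Fintype Q] (k m : ℕ) (hm : 1 ≤ m) (hmk : m ≤ k)
    (A : NFA (Fin k → Option σ) Q) :
    (HLang A.accepts (efPrefix k m)).Nonempty ↔
      ∃ S : Set (List σ), S.Nonempty ∧ S.Finite ∧ S.ncard ≤ m ∧
        HAccepts A.accepts (efPrefix k m) S := by
  constructor
  · rintro ⟨S, hSne, hAcc⟩
    have hdec : efPrefix k m = (efPrefix k m).take m ++ (efPrefix k m).drop m :=
      (List.take_append_drop _ _).symm
    rw [HAccepts, hdec] at hAcc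
    obtain ⟨T, hTS, hTfin, hTcard, hT⟩ :=
      hsat_small A.accepts _ (efPrefix_take_ex k m) _ (efPrefix_drop_all k m) S _ hAcc
    have hlen : ((efPrefix k m).take m).length = m := by
      simp [List.length_take, efPrefix]
      omega
    rw [hlen] at hTcard
    rcases T.eq_empty_or_nonempty with hTe | hTne
    · obtain ⟨w₀, hw₀⟩ := hSne
      refine ⟨{w₀}, Set.singleton_nonempty w₀, Set.finite_singleton w₀, by simpa using hm, ?_⟩
      rw [HAccepts, hdec]
      exact hT {w₀} (by simp [hTe]) (Set.singleton_subset_iff.mpr hw₀)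
    · refine ⟨T, hTne, hTfin, hTcard, ?_⟩
      rw [HAccepts, hdec]
      exact hT T subset_rfl hTS
  · rintro ⟨S, hSne, _, _, hAcc⟩
    exact ⟨S, hSne, hAcc⟩
end

section
/- Witness characterization of nonemptiness for NFH_∃∀: let 𝒜 be an NFH over Σ with quantifier prefix ∃x₁…∃x_m ∀x_{m+1}…∀x_k (m ≥ 1). Then 𝔏(𝒜) ≠ ∅ if and only if there exist words w₁,…,w_m ∈ Σ* such that for every function ζ : {1,…,k} → {1,…,m} with ζ(i) = i for all i ≤ m, the underlying NFA Â accepts the word assignment w_v for the assignment v given by v(x_i) = w_{ζ(i)} for all i ∈ {1,…,k}. -/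
section AUX
lemma mem_take_finRange {k m : ℕ} (i : Fin k) : i ∈ (List.finRange k).take m ↔ i.1 < m := by
  constructor
  · intro h
    obtain ⟨n, hn, he⟩ := List.mem_iff_getElem.mp h
    simp only [List.length_take, List.length_finRange, lt_min_iff] at hn
    rw [List.getElem_take, List.getElem_finRange] at he
    simp [← he, Fin.cast] at *
    omega
  · intro h
    refine List.mem_iff_getElem.mpr ⟨i.1, ?_, ?_⟩
    · simp only [List.length_take, List.length_finRange, lt_min_iff]; exact ⟨h, i.2⟩
    · rw [List.getElem_take, List.getElem_finRange]; ext; simp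
lemma mem_drop_finRange {k m : ℕ} (i : Fin k) : i ∈ (List.finRange k).drop m ↔ m ≤ i.1 := by
  constructor
  · intro h
    obtain ⟨n, hn, he⟩ := List.mem_iff_getElem.mp h
    rw [List.getElem_drop, List.getElem_finRange] at he
    simp [← he, Fin.cast]
  · intro h
    refine List.mem_iff_getElem.mpr ⟨i.1 - m, ?_, ?_⟩
    · simp only [List.length_drop, List.length_finRange]; omega
    · rw [List.getElem_drop, List.getElem_finRange]; ext; simp; omega
end AUX
set_option linter.unusedSectionVars false
section HS
variable {σ X : Type} [Fintype X] [DecidableEq X] {L : Language (X → Option σ)} {S : Set (List σ)}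
private lemma fun_eq1 {a : X} {t : List X} (ha : a ∉ t) (u v : X → List σ) :
    (fun x => if x ∈ t then u x else Function.update v a (u a) x)
      = fun x => if x ∈ a :: t then u x else v x := by
  funext x
  by_cases hx : x ∈ t
  · simp [hx]
  · by_cases hxa : x = a
    · subst hxa; simp [ha, hx]
    · simp [hx, hxa, Function.update, ha]
private lemma fun_eq2 {a : X} {t : List X} (ha : a ∉ t) (u v : X → List σ) (w : List σ) :
    (fun x => if x ∈ t then u x else Function.update v a w x)
      = fun x => if x ∈ a :: t then Function.update u a w x else v x := by
  funext x
  by_cases hx : x ∈ t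
  · have hxa : x ≠ a := fun e => ha (e ▸ hx)
    simp [hx, hxa, Function.update]
  · by_cases hxa : x = a
    · subst hxa; simp [ha, hx]
    · simp [hx, hxa, Function.update]
private lemma update_mem {a : X} {t : List X} (ha : a ∉ t) {u : X → List σ} {w : List σ}
    (hw : w ∈ S) (hu : ∀ x ∈ t, u x ∈ S) : ∀ x ∈ a :: t, Function.update u a w x ∈ S := by
  intro x hx
  rcases List.mem_cons.mp hx with rfl | hx
  · simpa using hw
  · have : x ≠ a := fun e => ha (e ▸ hx)
    simpa [Function.update, this] using hu x hx
lemma hsat_all (l : List X) (v : X → List σ) (hl : l.Nodup) :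
    HSat L (l.map fun x => (Quant.all, x)) S v ↔
      ∀ u : X → List σ, (∀ x ∈ l, u x ∈ S) →
        wordAssign (fun x => if x ∈ l then u x else v x) ∈ L := by
  induction l generalizing v with
  | nil => simp [HSat]
  | cons a t ih =>
    obtain ⟨ha, ht⟩ := List.nodup_cons.mp hl
    simp only [List.map_cons, HSat]
    constructor
    · intro h u hu
      have h2 := (ih (Function.update v a (u a)) ht).mp (h (u a) (hu a (by simp)))
        u (fun x hx => hu x (by simp [hx]))
      rwa [fun_eq1 ha] at h2
    · intro h w hw
      refine (ih (Function.update v a w) ht).mpr ?_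
      intro u hu
      have h2 := h (Function.update u a w) (update_mem ha hw hu)
      rwa [fun_eq2 ha]
lemma hsat_ex_append (l : List X) (rest : List (Quant × X)) (v : X → List σ) (hl : l.Nodup) :
    HSat L ((l.map fun x => (Quant.ex, x)) ++ rest) S v ↔
      ∃ u : X → List σ, (∀ x ∈ l, u x ∈ S) ∧
        HSat L rest S (fun x => if x ∈ l then u x else v x) := by
  induction l generalizing v with
  | nil => simp
  | cons a t ih =>
    obtain ⟨ha, ht⟩ := List.nodup_cons.mp hl
    simp only [List.map_cons, List.cons_append, HSat]
    constructor
    · rintro ⟨w, hw, h⟩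
      obtain ⟨u, hu, h2⟩ := (ih (Function.update v a w) ht).mp h
      exact ⟨Function.update u a w, update_mem ha hw hu, by rwa [fun_eq2 ha] at h2⟩
    · rintro ⟨u, hu, h⟩
      exact ⟨u a, hu a (by simp), (ih (Function.update v a (u a)) ht).mpr
        ⟨u, fun x hx => hu x (by simp [hx]), by rwa [fun_eq1 ha]⟩⟩
end HS

lemma efPrefix_decomp (k m : ℕ) :
    efPrefix k m = (((List.finRange k).take m).map fun i => (Quant.ex, i))
      ++ (((List.finRange k).drop m).map fun i => (Quant.all, i)) := by
  conv_lhs => rw [efPrefix, ← List.take_append_drop m (List.finRange k), List.map_append]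
  congr 1
  · apply List.map_congr_left
    intro i hi
    simp [(mem_take_finRange i).mp hi]
  · apply List.map_congr_left
    intro i hi
    have := (mem_drop_finRange i).mp hi
    simp [Nat.not_lt.mpr this]

lemma key_iff {σ Q : Type} [Fintype Q] {k m : ℕ} (A : NFA (Fin k → Option σ) Q)
    (S : Set (List σ)) (v : Fin k → List σ) :
    HSat A.accepts (efPrefix k m) S v ↔
      ∃ u : Fin k → List σ, (∀ i : Fin k, i.1 < m → u i ∈ S) ∧
        ∀ u' : Fin k → List σ, (∀ i : Fin k, m ≤ i.1 → u' i ∈ S) →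
          wordAssign (fun i : Fin k =>
            if m ≤ i.1 then u' i else if i.1 < m then u i else v i) ∈ A.accepts := by
  have ntake : ((List.finRange k).take m).Nodup :=
    (List.nodup_finRange k).sublist (List.take_sublist m _)
  have ndrop : ((List.finRange k).drop m).Nodup :=
    (List.nodup_finRange k).sublist (List.drop_sublist m _)
  rw [efPrefix_decomp, hsat_ex_append _ _ _ ntake]
  apply exists_congr; intro u
  apply and_congr
  · constructor
    · intro h i hi; exact h i ((mem_take_finRange i).mpr hi)
    · intro h i hi; exact h i ((mem_take_finRange i).mp hi)
  · rw [hsat_all _ _ ndrop]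
    constructor
    · intro h u' hu'
      have h2 := h u' (fun i hi => hu' i ((mem_drop_finRange i).mp hi))
      convert h2 using 3 with i
      simp [mem_drop_finRange, mem_take_finRange]
    · intro h u' hu'
      have h2 := h u' (fun i hi => hu' i ((mem_drop_finRange i).mpr hi))
      convert h2 using 3 with i
      simp [mem_drop_finRange, mem_take_finRange]


/-- Witness characterization of nonemptiness for NFH_∃∀: the hyperlanguage of an
NFH with quantifier prefix `∃x₁…∃x_m ∀x_{m+1}…∀x_k` (with `m ≥ 1`) is nonempty iff there are
words `w₁,…,w_m` such that for every `ζ : {1,…,k} → {1,…,m}` fixing `{1,…,m}` pointwise, the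
underlying NFA accepts the word assignment of `x_i ↦ w_{ζ(i)}`. -/
theorem nfh_ef_witness {σ Q : Type} [Fintype Q] (k m : ℕ) (hm : 1 ≤ m) (hmk : m ≤ k)
    (A : NFA (Fin k → Option σ) Q) :
    (HLang A.accepts (efPrefix k m)).Nonempty ↔
      ∃ w : Fin m → List σ,
        ∀ ζ : Fin k → Fin m,
          (∀ (i : Fin k) (h : i.1 < m), ζ i = ⟨i.1, h⟩) →
          wordAssign (fun i : Fin k => w (ζ i)) ∈ A.accepts := by
  constructor
  · rintro ⟨S, hSne, hAcc⟩
    rw [HAccepts, key_iff] at hAcc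
    obtain ⟨u, hu, hall⟩ := hAcc
    refine ⟨fun j => u ⟨j.1, lt_of_lt_of_le j.2 hmk⟩, fun ζ hζ => ?_⟩
    have h2 := hall (fun i => u ⟨(ζ i).1, lt_of_lt_of_le (ζ i).2 hmk⟩)
      (fun i _ => hu _ (ζ i).2)
    convert h2 using 2
    funext i
    by_cases hi : m ≤ i.1
    · simp [hi]
    · have hi' : i.1 < m := Nat.not_le.mp hi
      simp only [hi, if_false, hi', if_true]
      rw [hζ i hi']
  · rintro ⟨w, H⟩
    refine ⟨Set.range w, ⟨w ⟨0, hm⟩, Set.mem_range_self _⟩, ?_⟩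
    rw [HAccepts, key_iff]
    refine ⟨fun i => if h : i.1 < m then w ⟨i.1, h⟩ else w ⟨0, hm⟩, ?_, ?_⟩
    · intro i hi; simp [hi]
    · intro u' hu'
      have hch : ∀ i : Fin k, m ≤ i.1 → ∃ j, w j = u' i := fun i hi => hu' i hi
      classical
      set ζ : Fin k → Fin m := fun i =>
        if h : i.1 < m then ⟨i.1, h⟩ else Classical.choose (hch i (Nat.not_lt.mp h)) with hζdef
      have h2 := H ζ (fun i h => by simp [hζdef, h])
      convert h2 using 2
      funext i
      by_cases hi : m ≤ i.1
      · have hi' : ¬ i.1 < m := Nat.not_lt.mpr hi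
        simp only [hi, if_true, hζdef, hi', dif_neg, not_false_iff]
        exact (Classical.choose_spec (hch i hi)).symm
      · have hi' : i.1 < m := Nat.not_le.mp hi
        simp [hi, hi', hζdef]
end

section
/- Soundness of the positive test in the ∀∃-nonemptiness semi-algorithm: let 𝒜 be an NFH over Σ with variable set X = {x, y} and quantifier prefix ∀x∃y, with underlying NFA Â. Define L_∀ = {u ∈ Σ* | ∃v ∈ Σ*, Â accepts the word assignment for x ↦ u, y ↦ v} and L_∃ = {v ∈ Σ* | ∃u ∈ Σ*, Â accepts the word assignment for x ↦ u, y ↦ v}. If L_∃ ⊆ L_∀ and L_∀ ≠ ∅, then the hyperword L_∀ is accepted by 𝒜, i.e., L_∀ ∈ 𝔏(𝒜). -/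
/-- Soundness of the positive test in the ∀∃-nonemptiness semi-algorithm: for an
NFH with variables `{x, y}` (modeled as `Fin 2`, `x = 0`, `y = 1`) and quantifier prefix
`∀x∃y`, if `L_∃ ⊆ L_∀` and `L_∀ ≠ ∅`, then the hyperword `L_∀` is in the hyperlanguage. -/
theorem nfh_ae_positive_test {σ Q : Type} [Fintype Q]
    (A : NFA (Fin 2 → Option σ) Q)
    (hsub : {v : List σ | ∃ u : List σ, wordAssign ![u, v] ∈ A.accepts} ⊆
            {u : List σ | ∃ v : List σ, wordAssign ![u, v] ∈ A.accepts})
    (hne : {u : List σ | ∃ v : List σ, wordAssign ![u, v] ∈ A.accepts}.Nonempty) :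
    {u : List σ | ∃ v : List σ, wordAssign ![u, v] ∈ A.accepts} ∈
      HLang A.accepts [(Quant.all, 0), (Quant.ex, 1)] := by
  refine ⟨hne, ?_⟩
  intro u hu
  obtain ⟨v, hv⟩ := hu
  refine ⟨v, hsub ⟨u, hv⟩, ?_⟩
  have : (Function.update (Function.update (fun _ => ([] : List σ)) 0 u) 1 v) = ![u, v] := by
    funext i
    fin_cases i <;> simp [Function.update, Matrix.cons_val_zero, Matrix.cons_val_one]
  simpa [HSat, this] using hv
end

section
/- Soundness of the negative test in the ∀∃-nonemptiness semi-algorithm: let 𝒜 be an NFH over Σ with variable set X = {x, y} and quantifier prefix ∀x∃y, with underlying NFA Â. Define L_∀ = {u ∈ Σ* | ∃v ∈ Σ*, Â accepts the word assignment for x ↦ u, y ↦ v} and L_∃ = {v ∈ Σ* | ∃u ∈ Σ*, Â accepts the word assignment for x ↦ u, y ↦ v}. If L_∃ ∩ L_∀ = ∅, then 𝔏(𝒜) = ∅, i.e., 𝒜 accepts no nonempty hyperword. -/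
/-- Soundness of the negative test in the ∀∃-nonemptiness semi-algorithm: for an
NFH with variables `{x, y}` (modeled as `Fin 2`, `x = 0`, `y = 1`) and quantifier prefix
`∀x∃y`, if `L_∃ ∩ L_∀ = ∅`, then the hyperlanguage is empty. -/
theorem nfh_ae_negative_test {σ Q : Type} [Fintype Q]
    (A : NFA (Fin 2 → Option σ) Q)
    (hdisj : {v : List σ | ∃ u : List σ, wordAssign ![u, v] ∈ A.accepts} ∩
             {u : List σ | ∃ v : List σ, wordAssign ![u, v] ∈ A.accepts} = ∅) :
    HLang A.accepts [(Quant.all, 0), (Quant.ex, 1)] = ∅ := by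
  have key : ∀ (v : Fin 2 → List σ) (w w' : List σ),
      Function.update (Function.update v 0 w) 1 w' = ![w, w'] := by
    intro v w w'
    funext i
    fin_cases i <;> simp [Function.update]
  ext S
  simp only [Set.mem_empty_iff_false, iff_false]
  rintro ⟨⟨w₀, hw₀⟩, hacc⟩
  simp only [HAccepts, HSat] at hacc
  obtain ⟨w₁, hw₁, h1⟩ := hacc w₀ hw₀
  rw [key] at h1
  obtain ⟨w₂, hw₂, h2⟩ := hacc w₁ hw₁
  rw [key] at h2
  have : w₁ ∈ ({v : List σ | ∃ u : List σ, wordAssign ![u, v] ∈ A.accepts} ∩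
             {u : List σ | ∃ v : List σ, wordAssign ![u, v] ∈ A.accepts}) :=
    ⟨⟨w₀, h1⟩, ⟨w₂, h2⟩⟩
  rw [hdisj] at this
  exact this
end

section
/- Existential projection preserves regularity: let X be a finite set of word variables, Â an NFA over Σ̂ = (Σ ∪ {#})^X with finitely many states, x ∈ X, and L ⊆ Σ* a regular language. Then the language { w_v | v : (X \ {x}) → Σ* and there exists u ∈ L such that Â accepts w_{v[x↦u]} } of word assignments over (Σ ∪ {#})^{X\{x}} is regular. -/
set_option linter.unusedSectionVars false

namespace NFHP

theorem wordAssign_length {σ X : Type} [Fintype X] (v : X → List σ) :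
    (wordAssign v).length = Finset.univ.sup fun x : X => (v x).length := by
  simp [wordAssign]

theorem len_le_waLength {σ X : Type} [Fintype X] (v : X → List σ) (y : X) :
    (v y).length ≤ Finset.univ.sup fun x : X => (v x).length :=
  Finset.le_sup (f := fun x : X => (v x).length) (Finset.mem_univ y)

theorem wordAssign_eq_nil_iff {σ X : Type} [Fintype X] (v : X → List σ) :
    wordAssign v = [] ↔ ∀ y, v y = [] := by
  rw [← List.length_eq_zero_iff, wordAssign_length]
  constructor
  · intro h y
    have h2 := len_le_waLength v y
    rw [h] at h2
    rw [← List.length_eq_zero_iff]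
    omega
  · intro h
    apply Nat.le_zero.mp
    apply Finset.sup_le
    intro y _
    simp [h y]

theorem wordAssign_cons {σ X : Type} [Fintype X] (v : X → List σ) (h : ∃ y, v y ≠ []) :
    wordAssign v = (fun y => (v y).head?) :: wordAssign (fun y => (v y).tail) := by
  obtain ⟨y₀, hy₀⟩ := h
  have hne : Nonempty X := ⟨y₀⟩
  set N := Finset.univ.sup fun x : X => (v x).length with hN
  have hNpos : 0 < N := by
    have h2 := len_le_waLength v y₀
    have hl : 0 < (v y₀).length := List.length_pos_iff.mpr hy₀
    rw [← hN] at h2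
    omega
  have htail : (Finset.univ.sup fun x : X => ((v x).tail).length) = N - 1 := by
    apply le_antisymm
    · apply Finset.sup_le
      intro y _
      have h2 := len_le_waLength v y
      rw [← hN] at h2
      simp only [List.length_tail]
      omega
    · obtain ⟨y₁, _, hy₁⟩ := Finset.exists_mem_eq_sup (Finset.univ : Finset X)
        Finset.univ_nonempty (fun x : X => (v x).length)
      have h2 : ((v y₁).tail).length ≤ Finset.univ.sup fun x : X => ((v x).tail).length :=
        Finset.le_sup (f := fun x : X => ((v x).tail).length) (Finset.mem_univ y₁)
      rw [← hN] at hy₁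
      have h3 : N - 1 = ((v y₁).tail).length := by rw [List.length_tail, ← hy₁]
      rw [h3]
      exact h2
  have hrw : wordAssign v = (List.range (N - 1 + 1)).map (fun i x => (v x)[i]?) := by
    rw [wordAssign, ← hN]
    have hx : N - 1 + 1 = N := Nat.succ_pred_eq_of_pos hNpos
    rw [hx]
  rw [hrw, List.range_succ_eq_map, List.map_cons, List.map_map]
  congr 1
  · funext y
    exact List.head?_eq_getElem?.symm
  · rw [wordAssign, htail]
    apply List.map_congr_left
    intro i _
    funext y
    simp [List.getElem?_tail, Nat.succ_eq_add_one]


section NFAExtra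

variable {α S : Type} {ι : Sort*}

theorem nfa_evalFrom_cons (N : NFA α S) (T : Set S) (a : α) (w : List α) :
    N.evalFrom T (a :: w) = N.evalFrom (N.stepSet T a) w := rfl

theorem nfa_stepSet_iUnion (N : NFA α S) (f : ι → Set S) (a : α) :
    N.stepSet (⋃ i, f i) a = ⋃ i, N.stepSet (f i) a := by
  ext q
  simp only [NFA.mem_stepSet, Set.mem_iUnion]
  tauto

theorem nfa_evalFrom_iUnion (N : NFA α S) (f : ι → Set S) (w : List α) :
    N.evalFrom (⋃ i, f i) w = ⋃ i, N.evalFrom (f i) w := by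
  induction w generalizing f with
  | nil => simp [NFA.evalFrom_nil]
  | cons a w ih => rw [nfa_evalFrom_cons, nfa_stepSet_iUnion, ih]; rfl

theorem nfa_stepSet_union (N : NFA α S) (T₁ T₂ : Set S) (a : α) :
    N.stepSet (T₁ ∪ T₂) a = N.stepSet T₁ a ∪ N.stepSet T₂ a := by
  ext q
  simp only [NFA.mem_stepSet, Set.mem_union]
  constructor
  · rintro ⟨t, ht | ht, hq⟩
    · exact Or.inl ⟨t, ht, hq⟩
    · exact Or.inr ⟨t, ht, hq⟩
  · rintro (⟨t, ht, hq⟩ | ⟨t, ht, hq⟩)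
    · exact ⟨t, Or.inl ht, hq⟩
    · exact ⟨t, Or.inr ht, hq⟩

theorem nfa_evalFrom_union (N : NFA α S) (T₁ T₂ : Set S) (w : List α) :
    N.evalFrom (T₁ ∪ T₂) w = N.evalFrom T₁ w ∪ N.evalFrom T₂ w := by
  induction w generalizing T₁ T₂ with
  | nil => simp [NFA.evalFrom_nil]
  | cons a w ih => rw [nfa_evalFrom_cons, nfa_stepSet_union, ih]; rfl

theorem nfa_evalFrom_empty (N : NFA α S) (w : List α) :
    N.evalFrom (∅ : Set S) w = ∅ := by
  induction w with
  | nil => rfl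
  | cons a w ih =>
    rw [nfa_evalFrom_cons]
    have : N.stepSet ∅ a = ∅ := by simp [NFA.stepSet]
    rw [this, ih]

theorem nfa_mem_evalFrom_iff_exists (N : NFA α S) (T : Set S) (w : List α) (q : S) :
    q ∈ N.evalFrom T w ↔ ∃ p ∈ T, q ∈ N.evalFrom {p} w := by
  have h0 : T = ⋃ p ∈ T, {p} := by simp
  conv_lhs => rw [h0]
  simp only [nfa_evalFrom_iUnion, Set.mem_iUnion]
  exact ⟨fun ⟨p, h1, h2⟩ => ⟨p, h1, h2⟩, fun ⟨p, h1, h2⟩ => ⟨p, h1, h2⟩⟩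

theorem nfa_evalFrom_append (N : NFA α S) (T : Set S) (w₁ w₂ : List α) :
    N.evalFrom T (w₁ ++ w₂) = N.evalFrom (N.evalFrom T w₁) w₂ := by
  simp [NFA.evalFrom, List.foldl_append]

end NFAExtra

section ZipExt

variable {σ X : Type} [Fintype X] [DecidableEq X]

/-- Combine a letter over `X \ {x}` with a value for `x`. -/
def emb (x : X) (b : {y : X // y ≠ x} → Option σ) (c : Option σ) : X → Option σ :=
  fun y => if h : y = x then c else b ⟨y, h⟩

/-- Zip a word over `X \ {x}` with a word for coordinate `x`, padding with `none`. -/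
def zipExt (x : X) : List ({y : X // y ≠ x} → Option σ) → List σ → List (X → Option σ)
  | [], [] => []
  | [], c :: u => emb x (fun _ => none) (some c) :: zipExt x [] u
  | b :: w, [] => emb x b none :: zipExt x w []
  | b :: w, c :: u => emb x b (some c) :: zipExt x w u

theorem zipExt_nil_right (x : X) (w : List ({y : X // y ≠ x} → Option σ)) :
    zipExt x w [] = w.map (fun b => emb x b none) := by
  induction w with
  | nil => simp [zipExt]
  | cons b w ih => rw [zipExt, ih, List.map_cons]

theorem zipExt_nil_left (x : X) (u : List σ) :
    zipExt x [] u = u.map (fun c => emb x (fun _ => none) (some c)) := by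
  induction u with
  | nil => simp [zipExt]
  | cons c u ih => rw [zipExt, ih, List.map_cons]

theorem zipExt_append (x : X) (w : List ({y : X // y ≠ x} → Option σ)) (u rest : List σ)
    (h : w.length ≤ u.length) :
    zipExt x w (u ++ rest) = zipExt x w u ++ rest.map (fun c => emb x (fun _ => none) (some c)) := by
  induction w generalizing u with
  | nil =>
    rw [zipExt_nil_left, zipExt_nil_left, List.map_append]
  | cons b w ih =>
    cases u with
    | nil => simp at h
    | cons c u =>
      simp only [List.cons_append, zipExt]
      rw [ih u (by simpa using h)]

end ZipExt

section Key

variable {σ X : Type} [Fintype X] [DecidableEq X]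

theorem wordAssign_dite_eq_zipExt (x : X) (v : {y : X // y ≠ x} → List σ) (u : List σ) :
    wordAssign (fun y : X => if h : y = x then u else v ⟨y, h⟩) = zipExt x (wordAssign v) u := by
  suffices H : ∀ (n : ℕ) (v : {y : X // y ≠ x} → List σ) (u : List σ),
      (wordAssign v).length + u.length ≤ n →
      wordAssign (fun y : X => if h : y = x then u else v ⟨y, h⟩) = zipExt x (wordAssign v) u by
    exact H ((wordAssign v).length + u.length) v u le_rfl
  intro n
  induction n with
  | zero =>
    intro v u h
    have h1 : wordAssign v = [] := by rw [← List.length_eq_zero_iff]; omega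
    have h2 : u = [] := by rw [← List.length_eq_zero_iff]; omega
    subst h2
    rw [h1]
    have h3 : ∀ y, v y = [] := (wordAssign_eq_nil_iff v).mp h1
    rw [show zipExt x ([] : List ({y : X // y ≠ x} → Option σ)) [] = [] from by rw [zipExt]]
    rw [wordAssign_eq_nil_iff]
    intro y
    by_cases hy : y = x <;> simp [hy, h3]
  | succ n ih =>
    intro v u h
    by_cases hA : ∀ y, v y = []
    · have h1 : wordAssign v = [] := (wordAssign_eq_nil_iff v).mpr hA
      cases u with
      | nil =>
        rw [h1, show zipExt x ([] : List ({y : X // y ≠ x} → Option σ)) [] = [] from by rw [zipExt]]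
        rw [wordAssign_eq_nil_iff]
        intro y
        by_cases hy : y = x <;> simp [hy, hA]
      | cons c u' =>
        rw [h1, zipExt]
        have hex : ∃ y : X, (if h : y = x then c :: u' else v ⟨y, h⟩) ≠ [] := ⟨x, by simp⟩
        rw [wordAssign_cons _ hex]
        congr 1
        · funext y
          by_cases hy : y = x <;> simp [emb, hy, hA]
        · have he : (fun y : X => (if h : y = x then c :: u' else v ⟨y, h⟩).tail)
              = (fun y : X => if h : y = x then u' else v ⟨y, h⟩) := by
            funext y
            by_cases hy : y = x <;> simp [hy, hA]
          have hlen : (wordAssign v).length + u'.length ≤ n := by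
            rw [h1] at h ⊢
            simp only [List.length_nil, List.length_cons] at h ⊢
            omega
          rw [he, ih v u' hlen, h1]
    · push_neg at hA
      have hwv := wordAssign_cons v hA
      have hlen1 : (wordAssign fun z => (v z).tail).length + 1 = (wordAssign v).length := by
        rw [hwv]; simp
      cases u with
      | nil =>
        rw [hwv, zipExt]
        have hex : ∃ y : X, (if h : y = x then ([] : List σ) else v ⟨y, h⟩) ≠ [] := by
          obtain ⟨y₁, hy₁⟩ := hA
          exact ⟨y₁, by simp [y₁.2, hy₁]⟩
        rw [wordAssign_cons _ hex]
        congr 1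
        · funext y
          by_cases hy : y = x <;> simp [emb, hy]
        · have he : (fun y : X => (if h : y = x then ([] : List σ) else v ⟨y, h⟩).tail)
              = (fun y : X => if h : y = x then ([] : List σ) else (v ⟨y, h⟩).tail) := by
            funext y
            by_cases hy : y = x <;> simp [hy]
          have hlen : (wordAssign fun z : {y : X // y ≠ x} => (v z).tail).length
              + ([] : List σ).length ≤ n := by
            simp only [List.length_nil] at h ⊢
            omega
          rw [he, ih (fun z => (v z).tail) [] hlen]
      | cons c u' =>
        rw [hwv, zipExt]
        have hex : ∃ y : X, (if h : y = x then c :: u' else v ⟨y, h⟩) ≠ [] := ⟨x, by simp⟩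
        rw [wordAssign_cons _ hex]
        congr 1
        · funext y
          by_cases hy : y = x <;> simp [emb, hy]
        · have he : (fun y : X => (if h : y = x then c :: u' else v ⟨y, h⟩).tail)
              = (fun y : X => if h : y = x then u' else (v ⟨y, h⟩).tail) := by
            funext y
            by_cases hy : y = x <;> simp [hy]
          have hlen : (wordAssign fun z : {y : X // y ≠ x} => (v z).tail).length
              + u'.length ≤ n := by
            simp only [List.length_cons] at h
            omega
          rw [he, ih (fun z => (v z).tail) u' hlen]

end Key

section Valid

variable {σ ι : Type} [Fintype ι]

def GoodFrom : (ι → Prop) → List (ι → Option σ) → Prop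
  | _, [] => True
  | f, b :: w => (∀ y, f y → b y = none) ∧ GoodFrom (fun y => f y ∨ b y = none) w

def LastOkF (bb : Prop) : List (ι → Option σ) → Prop
  | [] => bb
  | [b] => ∃ y, b y ≠ none
  | _ :: b :: w => LastOkF bb (b :: w)

theorem lastOkF_ne_nil (bb bb' : Prop) (w : List (ι → Option σ)) (h : w ≠ []) :
    LastOkF bb w ↔ LastOkF bb' w := by
  induction w with
  | nil => simp at h
  | cons a w ih =>
    cases w with
    | nil => rfl
    | cons b w' =>
      simp only [LastOkF]
      exact ih (by simp)

theorem goodFrom_mono (w : List (ι → Option σ)) (f g : ι → Prop) (hfg : ∀ y, g y → f y)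
    (h : GoodFrom f w) : GoodFrom g w := by
  induction w generalizing f g with
  | nil => trivial
  | cons b w ih =>
    exact ⟨fun y hy => h.1 y (hfg y hy), ih _ _ (fun y => Or.imp (hfg y) id) h.2⟩

theorem goodFrom_all_none (w : List (ι → Option σ)) (f : ι → Prop) (y : ι)
    (h : GoodFrom f w) (hy : f y) : ∀ b ∈ w, b y = none := by
  induction w generalizing f with
  | nil => simp
  | cons b w ih =>
    intro b' hb'
    rcases List.mem_cons.mp hb' with rfl | hmem
    · exact h.1 y hy
    · exact ih _ h.2 (Or.inl hy) b' hmem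

theorem eq_nil_of_track_none (v : ι → List σ) (y : ι)
    (h : ∀ b ∈ wordAssign v, b y = none) : v y = [] := by
  by_contra hne
  have hpos : 0 < (v y).length := List.length_pos_iff.mpr hne
  have hlt : 0 < (wordAssign v).length := by
    rw [wordAssign_length]
    exact lt_of_lt_of_le hpos (len_le_waLength v y)
  have hmem := List.getElem_mem (l := wordAssign v) (n := 0) hlt
  have h0 := h _ hmem
  have : (wordAssign v)[0] = fun z => (v z)[0]? := by
    simp [wordAssign]
  rw [this] at h0
  simp only at h0
  rw [List.getElem?_eq_getElem hpos] at h0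
  exact Option.some_ne_none _ h0

theorem goodFrom_wordAssign (v : ι → List σ) (f : ι → Prop) (hf : ∀ y, f y → v y = []) :
    GoodFrom f (wordAssign v) := by
  suffices H : ∀ (n : ℕ) (v : ι → List σ) (f : ι → Prop), (wordAssign v).length ≤ n →
      (∀ y, f y → v y = []) → GoodFrom f (wordAssign v) from H _ v f le_rfl hf
  intro n
  induction n with
  | zero =>
    intro v f h _
    have h1 : wordAssign v = [] := by rw [← List.length_eq_zero_iff]; omega
    rw [h1]
    trivial
  | succ n ih =>
    intro v f h hf
    by_cases hA : ∀ y, v y = []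
    · rw [(wordAssign_eq_nil_iff v).mpr hA]
      trivial
    · push_neg at hA
      have hwv := wordAssign_cons v hA
      have hlen1 : (wordAssign fun z => (v z).tail).length + 1 = (wordAssign v).length := by
        rw [hwv]; simp
      rw [hwv]
      refine ⟨fun y hy => by simp [hf y hy], ?_⟩
      apply ih _ _ (by omega)
      intro y hy
      rcases hy with hy | hy
      · rw [hf y hy]; rfl
      · rw [List.head?_eq_none_iff.mp hy]; rfl

theorem lastOkF_wordAssign (v : ι → List σ) : LastOkF True (wordAssign v) := by
  suffices H : ∀ (n : ℕ) (v : ι → List σ), (wordAssign v).length ≤ n →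
      LastOkF True (wordAssign v) from H _ v le_rfl
  intro n
  induction n with
  | zero =>
    intro v h
    have h1 : wordAssign v = [] := by rw [← List.length_eq_zero_iff]; omega
    rw [h1]
    trivial
  | succ n ih =>
    intro v h
    by_cases hA : ∀ y, v y = []
    · rw [(wordAssign_eq_nil_iff v).mpr hA]
      trivial
    · push_neg at hA
      have hwv := wordAssign_cons v hA
      have hlen1 : (wordAssign fun z => (v z).tail).length + 1 = (wordAssign v).length := by
        rw [hwv]; simp
      rw [hwv]
      rcases ht : wordAssign (fun y => (v y).tail) with _ | ⟨b', t'⟩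
      · simp only [LastOkF]
        obtain ⟨y₁, hy₁⟩ := hA
        exact ⟨y₁, by simp [hy₁]⟩
      · simp only [LastOkF]
        rw [← ht]
        exact ih _ (by omega)

theorem exists_wordAssign_of_good (w : List (ι → Option σ))
    (hg : GoodFrom (fun _ => False) w) (hl : LastOkF True w) :
    ∃ v : ι → List σ, w = wordAssign v := by
  induction w with
  | nil => exact ⟨fun _ => [], ((wordAssign_eq_nil_iff _).mpr fun _ => rfl).symm⟩
  | cons b t ih =>
    have hg1 : GoodFrom (fun _ => False) t :=
      goodFrom_mono t _ _ (fun y h => False.elim h) hg.2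
    have hlt : LastOkF True t := by
      rcases t with _ | ⟨c, t'⟩
      · trivial
      · exact hl
    obtain ⟨v', hv'⟩ := ih hg1 hlt
    have h1 : ∀ y, b y = none → v' y = [] := by
      intro y hy
      apply eq_nil_of_track_none
      rw [← hv']
      exact goodFrom_all_none t _ y hg.2 (Or.inr hy)
    have hex : ∃ y, b y ≠ none := by
      rcases ht : t with _ | ⟨c, t'⟩
      · rw [ht] at hl
        exact hl
      · by_contra hno
        push_neg at hno
        have : ∀ y, v' y = [] := fun y => h1 y (hno y)
        have : t = [] := by rw [hv', wordAssign_eq_nil_iff]; exact this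
        rw [ht] at this
        simp at this
    refine ⟨fun y => (b y).elim [] (fun c => c :: v' y), ?_⟩
    have hvne : ∃ y, (fun y => (b y).elim [] (fun c => c :: v' y)) y ≠ [] := by
      obtain ⟨y₀, hy₀⟩ := hex
      rcases hb : b y₀ with _ | c
      · exact absurd hb hy₀
      · exact ⟨y₀, by simp [hb]⟩
    rw [wordAssign_cons _ hvne]
    congr 1
    · funext y
      rcases hb : b y with _ | c
      · simp [hb, h1 y hb]
      · simp [hb]
    · rw [hv']
      congr 1
      funext y
      rcases hb : b y with _ | c
      · simp [hb, h1 y hb]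
      · simp [hb]

theorem valid_iff (w : List (ι → Option σ)) :
    (GoodFrom (fun _ => False) w ∧ LastOkF True w) ↔ ∃ v : ι → List σ, w = wordAssign v := by
  constructor
  · rintro ⟨hg, hl⟩
    exact exists_wordAssign_of_good w hg hl
  · rintro ⟨v, rfl⟩
    exact ⟨goodFrom_wordAssign v _ (fun y h => False.elim h), lastOkF_wordAssign v⟩

open Classical in
/-- DFA checking that a word is a word assignment. -/
noncomputable def VD (σ ι : Type) [Fintype ι] : DFA (ι → Option σ) (Option ((ι → Prop) × Prop)) where
  step s b :=
    match s with
    | none => none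
    | some (f, _) =>
      if ∃ y, f y ∧ b y ≠ none then none
      else some (fun y => f y ∨ b y = none, ∃ y, b y ≠ none)
  start := some (fun _ => False, True)
  accept := {s | ∃ f p, s = some (f, p) ∧ p}

theorem vd_evalFrom_none (w : List (ι → Option σ)) :
    (VD σ ι).evalFrom none w = none := by
  induction w with
  | nil => rfl
  | cons a w ih => exact ih

open Classical in
theorem vd_main (w : List (ι → Option σ)) (f : ι → Prop) (bb : Prop) :
    ((VD σ ι).evalFrom (some (f, bb)) w ∈ (VD σ ι).accept) ↔ GoodFrom f w ∧ LastOkF bb w := by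
  induction w generalizing f bb with
  | nil =>
    constructor
    · rintro ⟨f', p', he, hp⟩
      cases he
      exact ⟨trivial, hp⟩
    · rintro ⟨-, hbb⟩
      exact ⟨f, bb, rfl, hbb⟩
  | cons b w ih =>
    show (VD σ ι).evalFrom ((VD σ ι).step (some (f, bb)) b) w ∈ (VD σ ι).accept ↔ _
    by_cases hbad : ∃ y, f y ∧ b y ≠ none
    · have hs : (VD σ ι).step (some (f, bb)) b = none := by
        show (if ∃ y, f y ∧ b y ≠ none then none else _) = none
        rw [if_pos hbad]
      rw [hs, vd_evalFrom_none]
      constructor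
      · rintro ⟨f', p', he, hp⟩
        simp at he
      · rintro ⟨⟨hgood1, -⟩, -⟩
        obtain ⟨y, hfy, hby⟩ := hbad
        exact absurd (hgood1 y hfy) hby
    · have hs : (VD σ ι).step (some (f, bb)) b
          = some (fun y => f y ∨ b y = none, ∃ y, b y ≠ none) := by
        show (if ∃ y, f y ∧ b y ≠ none then none else _) = _
        rw [if_neg hbad]
      rw [hs, ih]
      have hgood1 : ∀ y, f y → b y = none := by
        push_neg at hbad
        intro y hy
        exact hbad y hy
      show _ ↔ ((∀ y, f y → b y = none) ∧ GoodFrom _ w) ∧ LastOkF bb (b :: w)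
      rcases w with _ | ⟨c, w'⟩
      · show (GoodFrom _ [] ∧ (∃ y, b y ≠ none)) ↔ _
        show _ ↔ _ ∧ (∃ y, b y ≠ none)
        tauto
      · show _ ∧ LastOkF _ (c :: w') ↔ _ ∧ LastOkF bb (c :: w')
        rw [lastOkF_ne_nil _ bb _ (by simp)]
        tauto

theorem vd_accepts (w : List (ι → Option σ)) :
    w ∈ (VD σ ι).accepts ↔ ∃ v : ι → List σ, w = wordAssign v := by
  rw [DFA.mem_accepts]
  show (VD σ ι).evalFrom (some (fun _ => False, True)) w ∈ (VD σ ι).accept ↔ _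
  rw [vd_main, valid_iff]

end Valid

section Proj

variable {σ X Q T : Type} [Fintype X] [DecidableEq X]

/-- NFA over `X \ {x}` simulating `A` while guessing the `x`-coordinate, constrained by DFA
`M`. -/
def BN (A : NFA (X → Option σ) Q) (x : X) (M : DFA σ T) :
    NFA ({y : X // y ≠ x} → Option σ) (Q × Option T) where
  step p b :=
    match p.2 with
    | some m =>
      {p' | (∃ c : σ, p'.1 ∈ A.step p.1 (emb x b (some c)) ∧ p'.2 = some (M.step m c)) ∨
        (m ∈ M.accept ∧ p'.1 ∈ A.step p.1 (emb x b none) ∧ p'.2 = none)}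
    | none => {p' | p'.1 ∈ A.step p.1 (emb x b none) ∧ p'.2 = none}
  start := {p | p.1 ∈ A.start ∧ p.2 = some M.start}
  accept := {p | (p.2 = none ∧ p.1 ∈ A.accept) ∨
      (∃ m, p.2 = some m ∧ ∃ rest : List σ, M.evalFrom m rest ∈ M.accept ∧
        ∃ q' ∈ A.accept,
          q' ∈ A.evalFrom {p.1} (rest.map fun c => emb x (fun _ => none) (some c)))}

variable (A : NFA (X → Option σ) Q) (x : X) (M : DFA σ T)

theorem bn_start_eq : (BN A x M).start = {r : Q × Option T | r.1 ∈ A.start ∧ r.2 = some M.start} :=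
  rfl

theorem bn_stepSet_some (S : Set Q) (m : T) (b : {y : X // y ≠ x} → Option σ) :
    (BN A x M).stepSet {r | r.1 ∈ S ∧ r.2 = some m} b =
      (⋃ c : σ, {r | r.1 ∈ A.stepSet S (emb x b (some c)) ∧ r.2 = some (M.step m c)}) ∪
        {r | m ∈ M.accept ∧ r.1 ∈ A.stepSet S (emb x b none) ∧ r.2 = none} := by
  ext ⟨q', s'⟩
  simp only [NFA.mem_stepSet, Set.mem_union, Set.mem_iUnion, Set.mem_setOf_eq]
  constructor
  · rintro ⟨⟨q, s⟩, ⟨hq, hs⟩, hstep⟩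
    simp only at hs
    subst hs
    rcases hstep with ⟨c, h1, h2⟩ | ⟨hm, h1, h2⟩
    · exact Or.inl ⟨c, ⟨q, hq, h1⟩, h2⟩
    · exact Or.inr ⟨hm, ⟨q, hq, h1⟩, h2⟩
  · rintro (⟨c, ⟨q, hq, h1⟩, h2⟩ | ⟨hm, ⟨q, hq, h1⟩, h2⟩)
    · exact ⟨(q, some m), ⟨hq, rfl⟩, Or.inl ⟨c, h1, h2⟩⟩
    · exact ⟨(q, some m), ⟨hq, rfl⟩, Or.inr ⟨hm, h1, h2⟩⟩

theorem bn_stepSet_none (S : Set Q) (b : {y : X // y ≠ x} → Option σ) :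
    (BN A x M).stepSet {r | r.1 ∈ S ∧ r.2 = none} b =
      {r | r.1 ∈ A.stepSet S (emb x b none) ∧ r.2 = none} := by
  ext ⟨q', s'⟩
  simp only [NFA.mem_stepSet, Set.mem_setOf_eq]
  constructor
  · rintro ⟨⟨q, s⟩, ⟨hq, hs⟩, hstep⟩
    simp only at hs
    subst hs
    obtain ⟨h1, h2⟩ := hstep
    exact ⟨⟨q, hq, h1⟩, h2⟩
  · rintro ⟨⟨q, hq, h1⟩, h2⟩
    exact ⟨(q, none), ⟨hq, rfl⟩, h1, h2⟩

theorem bn_evalFrom_none (S : Set Q) (w : List ({y : X // y ≠ x} → Option σ)) :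
    (BN A x M).evalFrom {r | r.1 ∈ S ∧ r.2 = none} w =
      {r | r.1 ∈ A.evalFrom S (w.map fun b => emb x b none) ∧ r.2 = none} := by
  induction w generalizing S with
  | nil => simp [NFA.evalFrom_nil]
  | cons b w ih =>
    rw [nfa_evalFrom_cons, bn_stepSet_none, ih, List.map_cons, nfa_evalFrom_cons]

theorem bn_main (w : List ({y : X // y ≠ x} → Option σ)) (S : Set Q) (m : T)
    (p : Q × Option T) :
    p ∈ (BN A x M).evalFrom {r | r.1 ∈ S ∧ r.2 = some m} w ↔
      ((∃ m', p.2 = some m' ∧ ∃ u : List σ, u.length = w.length ∧ m' = M.evalFrom m u ∧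
          p.1 ∈ A.evalFrom S (zipExt x w u)) ∨
        (p.2 = none ∧ ∃ u : List σ, u.length < w.length ∧ M.evalFrom m u ∈ M.accept ∧
          p.1 ∈ A.evalFrom S (zipExt x w u))) := by
  induction w generalizing S m with
  | nil =>
    rw [NFA.evalFrom_nil]
    constructor
    · rintro ⟨h1, h2⟩
      refine Or.inl ⟨m, h2, [], rfl, rfl, ?_⟩
      rw [show zipExt x ([] : List ({y : X // y ≠ x} → Option σ)) [] = [] from by rw [zipExt]]
      exact h1
    · rintro (⟨m', hp2, u, hu, hm', hq⟩ | ⟨_, u, hu, _⟩)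
      · obtain rfl := List.length_eq_zero_iff.mp hu
        rw [show zipExt x ([] : List ({y : X // y ≠ x} → Option σ)) [] = [] from by
          rw [zipExt]] at hq
        rw [NFA.evalFrom_nil] at hq
        exact ⟨hq, by rw [hp2, hm']; rfl⟩

      · simp at hu
  | cons b w ih =>
    rw [nfa_evalFrom_cons, bn_stepSet_some, nfa_evalFrom_union]
    rw [Set.mem_union, nfa_evalFrom_iUnion, Set.mem_iUnion]
    have hnone : p ∈ (BN A x M).evalFrom
        {r : Q × Option T | m ∈ M.accept ∧ r.1 ∈ A.stepSet S (emb x b none) ∧ r.2 = none} w ↔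
        (m ∈ M.accept ∧ p.1 ∈ A.evalFrom (A.stepSet S (emb x b none))
          (w.map fun b' => emb x b' none) ∧ p.2 = none) := by
      by_cases hm : m ∈ M.accept
      · have he : {r : Q × Option T | m ∈ M.accept ∧ r.1 ∈ A.stepSet S (emb x b none)
            ∧ r.2 = none} = {r | r.1 ∈ A.stepSet S (emb x b none) ∧ r.2 = none} := by
          ext r; simp [hm]
        rw [he, bn_evalFrom_none]
        simp [hm]
      · have he : {r : Q × Option T | m ∈ M.accept ∧ r.1 ∈ A.stepSet S (emb x b none)
            ∧ r.2 = none} = ∅ := by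
          ext r; simp [hm]
        rw [he, nfa_evalFrom_empty]
        simp [hm]
    rw [hnone]
    constructor
    · rintro (⟨c, hc⟩ | ⟨hm, hq, hp2⟩)
      · rcases (ih _ _).mp hc with ⟨m', hp2, u', hlen, hm', hq⟩ | ⟨hp2, u', hlen, hacc, hq⟩
        · refine Or.inl ⟨m', hp2, c :: u', by simp [hlen], hm', ?_⟩
          rw [zipExt, nfa_evalFrom_cons]
          exact hq
        · refine Or.inr ⟨hp2, c :: u', by simp; omega, hacc, ?_⟩
          rw [zipExt, nfa_evalFrom_cons]
          exact hq
      · refine Or.inr ⟨hp2, [], by simp, hm, ?_⟩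
        rw [zipExt, nfa_evalFrom_cons, zipExt_nil_right]
        exact hq
    · rintro (⟨m', hp2, u, hlen, hm', hq⟩ | ⟨hp2, u, hlen, hacc, hq⟩)
      · cases u with
        | nil => simp at hlen
        | cons c u' =>
          refine Or.inl ⟨c, (ih _ _).mpr (Or.inl ⟨m', hp2, u', by simpa using hlen, hm', ?_⟩)⟩
          rw [zipExt, nfa_evalFrom_cons] at hq
          exact hq
      · cases u with
        | nil =>
          refine Or.inr ⟨hacc, ?_, hp2⟩
          rw [zipExt, nfa_evalFrom_cons, zipExt_nil_right] at hq
          exact hq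
        | cons c u' =>
          refine Or.inl ⟨c, (ih _ _).mpr (Or.inr ⟨hp2, u', by simp at hlen; omega, hacc, ?_⟩)⟩
          rw [zipExt, nfa_evalFrom_cons] at hq
          exact hq

theorem bn_accepts (w : List ({y : X // y ≠ x} → Option σ)) :
    w ∈ (BN A x M).accepts ↔ ∃ u ∈ M.accepts, zipExt x w u ∈ A.accepts := by
  rw [NFA.mem_accepts]
  constructor
  · rintro ⟨p, hacc, hev⟩
    rw [bn_start_eq, bn_main] at hev
    rcases hev with ⟨m', hp2, u₁, hlen, hm', hq⟩ | ⟨hp2, u, hlen, haccu, hq⟩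
    · rcases hacc with ⟨hpnone, _⟩ | ⟨m'', hp2', rest, hMrest, q', hq'A, hq'ev⟩
      · rw [hp2] at hpnone
        simp at hpnone
      · rw [hp2] at hp2'
        obtain rfl : m' = m'' := Option.some.inj hp2'
        refine ⟨u₁ ++ rest, ?_, ?_⟩
        · show M.evalFrom M.start (u₁ ++ rest) ∈ M.accept
          rw [DFA.evalFrom_of_append, ← hm']
          exact hMrest
        · rw [NFA.mem_accepts]
          refine ⟨q', hq'A, ?_⟩
          rw [zipExt_append x w u₁ rest (by omega), nfa_evalFrom_append,
            nfa_mem_evalFrom_iff_exists]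
          exact ⟨p.1, hq, hq'ev⟩
    · rcases hacc with ⟨_, hpA⟩ | ⟨m'', hp2', _⟩
      · exact ⟨u, haccu, NFA.mem_accepts.mpr ⟨p.1, hpA, hq⟩⟩
      · rw [hp2] at hp2'
        simp at hp2'
  · rintro ⟨u, huM, huA⟩
    obtain ⟨q'', hq''A, hq''ev⟩ := NFA.mem_accepts.mp huA
    by_cases hlt : u.length < w.length
    · refine ⟨(q'', none), Or.inl ⟨rfl, hq''A⟩, ?_⟩
      rw [bn_start_eq, bn_main]
      exact Or.inr ⟨rfl, u, hlt, huM, hq''ev⟩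
    · push_neg at hlt
      have hu : u = u.take w.length ++ u.drop w.length := (List.take_append_drop _ u).symm
      have hlen1 : (u.take w.length).length = w.length := by
        rw [List.length_take]
        omega
      have hz : zipExt x w u = zipExt x w (u.take w.length) ++
          (u.drop w.length).map (fun c => emb x (fun _ => none) (some c)) := by
        conv_lhs => rw [hu]
        rw [zipExt_append x w _ _ (by omega)]
      rw [hz, nfa_evalFrom_append, nfa_mem_evalFrom_iff_exists] at hq''ev
      obtain ⟨q, hqev, hq''2⟩ := hq''ev
      refine ⟨(q, some (M.evalFrom M.start (u.take w.length))), ?_, ?_⟩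
      · refine Or.inr ⟨_, rfl, u.drop w.length, ?_, q'', hq''A, hq''2⟩
        rw [← DFA.evalFrom_of_append, ← hu]
        exact huM
      · rw [bn_start_eq, bn_main]
        exact Or.inl ⟨_, rfl, u.take w.length, hlen1, rfl, hqev⟩

end Proj

section Product

variable {γ S₁ S₂ : Type}

def prodDFA (M₁ : DFA γ S₁) (M₂ : DFA γ S₂) : DFA γ (S₁ × S₂) where
  step p a := (M₁.step p.1 a, M₂.step p.2 a)
  start := (M₁.start, M₂.start)
  accept := {p | p.1 ∈ M₁.accept ∧ p.2 ∈ M₂.accept}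

theorem prodDFA_evalFrom (M₁ : DFA γ S₁) (M₂ : DFA γ S₂) (s : S₁) (t : S₂) (w : List γ) :
    (prodDFA M₁ M₂).evalFrom (s, t) w = (M₁.evalFrom s w, M₂.evalFrom t w) := by
  induction w generalizing s t with
  | nil => rfl
  | cons a w ih => exact ih _ _

theorem prodDFA_mem_accepts (M₁ : DFA γ S₁) (M₂ : DFA γ S₂) (w : List γ) :
    w ∈ (prodDFA M₁ M₂).accepts ↔ w ∈ M₁.accepts ∧ w ∈ M₂.accepts := by
  show (prodDFA M₁ M₂).evalFrom (M₁.start, M₂.start) w ∈ (prodDFA M₁ M₂).accept ↔ _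
  rw [prodDFA_evalFrom]
  exact Iff.rfl

theorem dfa_isRegular {S : Type} [Finite S] (M : DFA γ S) : M.accepts.IsRegular :=
  ⟨S, Fintype.ofFinite S, M, rfl⟩

end Product

end NFHP

/-- Existential projection preserves regularity: given an NFA `A` over the
extended alphabet for variable set `X`, a variable `x ∈ X`, and a regular language `L ⊆ Σ*`,
the language of word assignments `w_v` over the variables `X \ {x}` such that there exists
`u ∈ L` with `w_{v[x↦u]}` accepted by `A`, is regular. -/
theorem nfh_exists_projection_regular {σ X Q : Type} [Fintype X] [DecidableEq X] [Fintype Q]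
    (A : NFA (X → Option σ) Q) (x : X) (L : Language σ) (hL : L.IsRegular) :
    Language.IsRegular
      ({ w : List ({y : X // y ≠ x} → Option σ) |
          ∃ v : {y : X // y ≠ x} → List σ, w = wordAssign v ∧
            ∃ u ∈ L, wordAssign (fun y : X => if h : y = x then u else v ⟨y, h⟩) ∈ A.accepts } :
        Language ({y : X // y ≠ x} → Option σ)) := by
  classical
  obtain ⟨T, fT, M, hM⟩ := hL
  have hset :
      ({ w : List ({y : X // y ≠ x} → Option σ) |
          ∃ v : {y : X // y ≠ x} → List σ, w = wordAssign v ∧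
            ∃ u ∈ L, wordAssign (fun y : X => if h : y = x then u else v ⟨y, h⟩) ∈ A.accepts } :
        Language ({y : X // y ≠ x} → Option σ))
      = (NFHP.prodDFA (NFHP.VD σ {y : X // y ≠ x}) (NFHP.BN A x M).toDFA).accepts := by
    ext w
    rw [Set.mem_setOf_eq]
    refine Iff.trans ?_ (NFHP.prodDFA_mem_accepts _ _ w).symm
    have htd : ∀ w' : List ({y : X // y ≠ x} → Option σ),
        w' ∈ (NFHP.BN A x M).toDFA.accepts ↔ w' ∈ (NFHP.BN A x M).accepts := fun w' => by
      rw [NFA.toDFA_correct]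
    rw [htd, NFHP.vd_accepts, NFHP.bn_accepts]
    constructor
    · rintro ⟨v, rfl, u, huL, huA⟩
      refine ⟨⟨v, rfl⟩, u, by rw [hM]; exact huL, ?_⟩
      rw [← NFHP.wordAssign_dite_eq_zipExt]
      exact huA
    · rintro ⟨⟨v, rfl⟩, u, huM, huA⟩
      refine ⟨v, rfl, u, by rw [← hM]; exact huM, ?_⟩
      rw [NFHP.wordAssign_dite_eq_zipExt]
      exact huA
  rw [hset]
  exact NFHP.dfa_isRegular _
end

section
/- Correctness of the Hamiltonian-cycle reduction: let n ≥ 1 and let E : Fin n → Fin n → Prop be a directed graph on vertices v₁,…,v_n. For each i, let w_i ∈ {0,1}* be the word of length n whose letters are all 0 except for a 1 in position i, and let S = {w₁,…,w_n}. Let 𝒜 be the NFH over Σ = {0,1} with variables x₁,…,x_n, quantifier prefix ∃x₁…∃x_n, state set {v₁,…,v_n}, initial states {v₁}, accepting states {v₁}, and, for every edge (v_i, v_j) with E v_i v_j, a transition from v_i to v_j labeled by the letter assigning 1 to x_i and 0 to every other variable. Then 𝒜 accepts S if and only if the graph has a Hamiltonian cycle, i.e., an enumeration u₁ = v₁, u₂,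 …, u_n of all n vertices with E u_j u_{j+1} for all 1 ≤ j < n and E u_n u₁. -/
/-- The NFH underlying NFA of the Hamiltonian-cycle reduction: states and variables are the
vertices `Fin n`, alphabet `{0,1}` is `Bool`, and for every edge `(i, j)` there is a
transition from `i` to `j` labeled by the letter assigning `1` to `x_i` and `0` to every
other variable. Initial and accepting states are both `{v₁}`. -/
def hamNFA (n : ℕ) (hn : 1 ≤ n) (E : Fin n → Fin n → Prop) :
    NFA (Fin n → Option Bool) (Fin n) where
  step := fun i a => {j | E i j ∧ a = fun x => some (decide (x = i))}
  start := {⟨0, hn⟩}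
  accept := {⟨0, hn⟩}

theorem hsat_ex_iff {σ X : Type} [Fintype X] [DecidableEq X] (L : Language (X → Option σ))
    (l : List X) (S : Set (List σ)) (v : X → List σ) :
    HSat L (l.map fun x => (Quant.ex, x)) S v ↔
      ∃ f : X → List σ, (∀ x ∈ l, f x ∈ S) ∧
        wordAssign (fun x => if x ∈ l then f x else v x) ∈ L := by
  induction l generalizing v with
  | nil => simp [HSat]
  | cons x l ih =>
    simp only [List.map_cons, HSat]
    constructor
    · rintro ⟨w, hw, h⟩
      rw [ih] at h
      obtain ⟨f, hf, hL⟩ := h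
      refine ⟨fun y => if y ∈ l then f y else if y = x then w else v y, ?_, ?_⟩
      · intro y hy
        by_cases h1 : y ∈ l
        · simpa [h1] using hf y h1
        · simp only [List.mem_cons] at hy
          rcases hy with rfl | hy
          · simpa [h1] using hw
          · exact absurd hy h1
      · have he : (fun y => if y ∈ x :: l then
            (fun y => if y ∈ l then f y else if y = x then w else v y) y else v y) =
            (fun y => if y ∈ l then f y else Function.update v x w y) := by
          funext y
          by_cases h1 : y ∈ l <;> by_cases h2 : y = x <;>
            simp [h1, h2, Function.update_apply]
        rw [he]; exact hL
    · rintro ⟨f, hf, hL⟩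
      refine ⟨f x, hf x List.mem_cons_self, ?_⟩
      rw [ih]
      refine ⟨f, fun y hy => hf y (List.mem_cons_of_mem _ hy), ?_⟩
      have he : (fun y => if y ∈ l then f y else Function.update v x (f x) y) =
          (fun y => if y ∈ x :: l then f y else v y) := by
        funext y
        by_cases h1 : y ∈ l <;> by_cases h2 : y = x <;>
          simp [h1, h2, Function.update_apply]
      rw [he]; exact hL

theorem nfa_evalFrom_iff {α Q : Type} (M : NFA α Q) (w : List α) (S : Set Q) (q : Q) :
    q ∈ M.evalFrom S w ↔ ∃ r : ℕ → Q, r 0 ∈ S ∧ r w.length = q ∧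
      ∀ i, (h : i < w.length) → r (i+1) ∈ M.step (r i) w[i] := by
  induction w generalizing S with
  | nil =>
    simp only [NFA.evalFrom_nil, List.length_nil]
    constructor
    · intro h; exact ⟨fun _ => q, h, rfl, by omega⟩
    · rintro ⟨r, h0, rfl, _⟩; exact h0
  | cons a w ih =>
    have hrw : M.evalFrom S (a :: w) = M.evalFrom (M.stepSet S a) w := rfl
    rw [hrw, ih]
    constructor
    · rintro ⟨r, h0, hlast, hstep⟩
      rw [NFA.mem_stepSet] at h0
      obtain ⟨s, hs, hstep0⟩ := h0
      refine ⟨fun i => if i = 0 then s else r (i - 1), hs, by simpa using hlast, ?_⟩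
      intro i hi
      rcases Nat.eq_zero_or_pos i with rfl | hpos
      · simpa using hstep0
      · obtain ⟨j, rfl⟩ := Nat.exists_eq_add_of_le hpos
        simp only [List.length_cons] at hi
        have := hstep j (by omega)
        simpa [Nat.add_comm 1 j] using this
    · rintro ⟨r, h0, hlast, hstep⟩
      refine ⟨fun i => r (i + 1), ?_, by simpa using hlast, ?_⟩
      · rw [NFA.mem_stepSet]
        exact ⟨r 0, h0, hstep 0 (by simp)⟩
      · intro i hi
        have := hstep (i + 1) (by simpa using Nat.succ_lt_succ hi)
        simpa using this

theorem wordAssign_g (n : ℕ) (hn : 1 ≤ n) (g : Fin n → Fin n) :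
    wordAssign (fun x : Fin n => List.ofFn fun j : Fin n => decide (j = g x)) =
      List.ofFn (fun i : Fin n => fun x : Fin n => some (decide (i = g x))) := by
  have : Nonempty (Fin n) := ⟨⟨0, hn⟩⟩
  have hs : (Finset.univ.sup fun x : Fin n =>
      (List.ofFn fun j : Fin n => decide (j = g x)).length) = n := by
    simp [Finset.sup_const Finset.univ_nonempty]
  unfold wordAssign
  rw [hs]
  apply List.ext_getElem
  · simp
  · intro i h1 h2
    simp only [List.getElem_map, List.getElem_range, List.getElem_ofFn]
    funext x
    simp only [List.length_map, List.length_range] at h1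
    simp [List.getElem?_ofFn, h1]

/-- Correctness of the Hamiltonian-cycle reduction: the NFH with quantifier
prefix `∃x₁…∃x_n` over `hamNFA` accepts the hyperword `S = {w₁,…,w_n}`, where `w_i ∈ {0,1}ⁿ`
has a `1` exactly in position `i`, iff the graph has a Hamiltonian cycle starting at `v₁`. -/
theorem nfh_hamiltonian_reduction (n : ℕ) (hn : 1 ≤ n) (E : Fin n → Fin n → Prop) :
    HAccepts (hamNFA n hn E).accepts
        ((List.finRange n).map fun i => (Quant.ex, i))
        (Set.range fun i : Fin n => List.ofFn fun j : Fin n => decide (j = i)) ↔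
      ∃ u : Fin n → Fin n, Function.Bijective u ∧ u ⟨0, hn⟩ = ⟨0, hn⟩ ∧
        (∀ j : ℕ, (h : j + 1 < n) → E (u ⟨j, by omega⟩) (u ⟨j + 1, h⟩)) ∧
        E (u ⟨n - 1, by omega⟩) (u ⟨0, hn⟩) := by
  rw [HAccepts, hsat_ex_iff]
  -- step 1: reduce to ∃ g
  have key : (∃ f : Fin n → List Bool,
      (∀ x ∈ List.finRange n, f x ∈ Set.range fun i : Fin n =>
        List.ofFn fun j : Fin n => decide (j = i)) ∧
      wordAssign (fun x => if x ∈ List.finRange n then f x else []) ∈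
        (hamNFA n hn E).accepts) ↔
      ∃ g : Fin n → Fin n,
        List.ofFn (fun i : Fin n => fun x : Fin n => some (decide (i = g x))) ∈
          (hamNFA n hn E).accepts := by
    constructor
    · rintro ⟨f, hf, hL⟩
      choose g hg using fun x => hf x (List.mem_finRange x)
      refine ⟨g, ?_⟩
      rw [← wordAssign_g n hn g]
      have : (fun x => if x ∈ List.finRange n then f x else []) =
          (fun x : Fin n => List.ofFn fun j : Fin n => decide (j = g x)) := by
        funext x
        simp [List.mem_finRange, ← hg x]
      rwa [this] at hL
    · rintro ⟨g, hL⟩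
      refine ⟨fun x => List.ofFn fun j : Fin n => decide (j = g x),
        fun x _ => ⟨g x, rfl⟩, ?_⟩
      have : (fun x : Fin n => if x ∈ List.finRange n then
          List.ofFn (fun j : Fin n => decide (j = g x)) else []) =
          (fun x : Fin n => List.ofFn fun j : Fin n => decide (j = g x)) := by
        funext x; simp
      rw [this, wordAssign_g n hn g]
      exact hL
  rw [key]
  -- step 2: unfold acceptance
  have hacc : ∀ g : Fin n → Fin n,
      (List.ofFn (fun i : Fin n => fun x : Fin n => some (decide (i = g x))) ∈
        (hamNFA n hn E).accepts) ↔
      ∃ r : ℕ → Fin n, r 0 = ⟨0, hn⟩ ∧ r n = ⟨0, hn⟩ ∧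
        ∀ i, (h : i < n) → E (r i) (r (i+1)) ∧ ∀ x : Fin n, (⟨i, h⟩ : Fin n) = g x ↔ x = r i := by
    intro g
    rw [NFA.mem_accepts]
    constructor
    · rintro ⟨q, hq, hrun⟩
      rw [nfa_evalFrom_iff] at hrun
      obtain ⟨r, h0, hlast, hstep⟩ := hrun
      simp only [hamNFA, Set.mem_singleton_iff] at hq h0
      refine ⟨r, h0, ?_, ?_⟩
      · simp only [List.length_ofFn] at hlast; rw [hlast, hq]
      · intro i h
        have := hstep i (by simp [h])
        simp only [hamNFA, List.getElem_ofFn, Set.mem_setOf_eq] at this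
        refine ⟨this.1, fun x => ?_⟩
        have hx := congrFun this.2 x
        simp only [Option.some.injEq] at hx
        exact decide_eq_decide.mp hx
    · rintro ⟨r, h0, hlast, hstep⟩
      refine ⟨⟨0, hn⟩, rfl, ?_⟩
      rw [nfa_evalFrom_iff]
      refine ⟨r, by simp [hamNFA, h0], by simp [hlast], ?_⟩
      intro i hi
      simp only [List.length_ofFn] at hi
      have h := hstep i hi
      simp only [hamNFA, List.getElem_ofFn, Set.mem_setOf_eq]
      refine ⟨h.1, ?_⟩
      funext x
      simp [decide_eq_decide.mpr (h.2 x)]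
  simp only [hacc]
  -- step 3: run ↔ hamiltonian cycle
  constructor
  · rintro ⟨g, r, h0, hlast, hstep⟩
    refine ⟨fun j => r j.val, ?_, h0, ?_, ?_⟩
    · constructor
      · intro a b hab
        have hab' : r a.val = r b.val := hab
        have ha := ((hstep a.val a.isLt).2 (r a.val)).mpr rfl
        have hb := ((hstep b.val b.isLt).2 (r b.val)).mpr rfl
        rw [hab'] at ha
        have h2 : (⟨a.val, a.isLt⟩ : Fin n) = ⟨b.val, b.isLt⟩ := ha.trans hb.symm
        simp only [Fin.mk.injEq] at h2
        exact Fin.ext h2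
      · intro x
        refine ⟨g x, ?_⟩
        exact (((hstep (g x).val (g x).isLt).2 x).mp (by simp)).symm
    · intro j h
      exact (hstep j (by omega)).1
    · have := (hstep (n-1) (by omega)).1
      have he : n - 1 + 1 = n := by omega
      rw [he, hlast, ← h0] at this
      exact this
  · rintro ⟨u, hbij, hu0, hmid, hlastE⟩
    obtain ⟨geq, hg1, hg2⟩ := Function.bijective_iff_has_inverse.mp hbij
    refine ⟨geq, fun i => if h : i < n then u ⟨i, h⟩ else ⟨0, hn⟩,
      by show (if h : 0 < n then u ⟨0, h⟩ else ⟨0, hn⟩) = ⟨0, hn⟩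
         have h0n : 0 < n := hn
         rw [dif_pos h0n]; exact hu0, by simp, ?_⟩
    intro i hi
    constructor
    · by_cases h1 : i + 1 < n
      · simpa [hi, h1] using hmid i h1
      · have : i = n - 1 := by omega
        subst this
        simpa [hi, h1, hu0, Nat.lt_irrefl] using hlastE
    · intro x
      simp only [hi, dif_pos]
      constructor
      · intro hgx
        have h3 := hg2 x
        rw [← hgx] at h3
        exact h3.symm
      · rintro rfl; exact (hg1 _).symm
end

section
/- Wild-card elimination: every NFH with wild-card letters can be translated to an ordinary NFH. That is, for every NFH* 𝒜 over Σ with variable set X and quantifier prefix α, there exists an NFH 𝒜′ over Σ with the same variable set X and the same quantifier prefix α such that 𝔏(𝒜′) = 𝔏(𝒜). -/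
/-- The wild-card alphabet `Σ ∪ {#, ⋆}`: `none` is the wild card `⋆`, `some none` is the
padding symbol `#`, and `some (some a)` is the letter `a ∈ Σ`. -/
abbrev WildLetter (σ : Type) : Type := Option (Option σ)

/-- A wild-card letter matches a concrete letter of the extended alphabet if on every variable
it is either the wild card or the concrete value. -/
def LetterMatches {σ X : Type} (a' : X → WildLetter σ) (a : X → Option σ) : Prop :=
  ∀ x : X, a' x = none ∨ a' x = some (a x)

/-- Satisfaction for an NFH with wild cards: in the base case, the underlying NFA must accept
some word of the same length as `w_v` matching `w_v` letterwise. -/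
def HSatStar {σ X Q : Type} [Fintype X] [DecidableEq X] (A : NFA (X → WildLetter σ) Q) :
    List (Quant × X) → Set (List σ) → (X → List σ) → Prop
  | [], _, v => ∃ w' ∈ A.accepts, List.Forall₂ LetterMatches w' (wordAssign v)
  | (Quant.ex, x) :: qs, S, v => ∃ w ∈ S, HSatStar A qs S (Function.update v x w)
  | (Quant.all, x) :: qs, S, v => ∀ w ∈ S, HSatStar A qs S (Function.update v x w)

/-- The hyperlanguage of an NFH with wild cards. -/
def HLangStar {σ X Q : Type} [Fintype X] [DecidableEq X] (A : NFA (X → WildLetter σ) Q)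
    (qs : List (Quant × X)) : Set (Set (List σ)) :=
  {S | S.Nonempty ∧ HSatStar A qs S (fun _ => [])}

section Aux

variable {σ X Q : Type}

/-- The de-wildcarded NFA. -/
def elimWild (A : NFA (X → WildLetter σ) Q) : NFA (X → Option σ) Q where
  step := fun q a => {q' | ∃ a', LetterMatches a' a ∧ q' ∈ A.step q a'}
  start := A.start
  accept := A.accept

lemma stepSet_iUnion {α Q ι : Type} (A : NFA α Q) (S : ι → Set Q) (a : α) :
    A.stepSet (⋃ i, S i) a = ⋃ i, A.stepSet (S i) a := by
  ext q; simp [NFA.stepSet]; tauto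

lemma evalFrom_iUnion {α Q ι : Type} (A : NFA α Q) (S : ι → Set Q) (w : List α) :
    A.evalFrom (⋃ i, S i) w = ⋃ i, A.evalFrom (S i) w := by
  induction w generalizing S with
  | nil => rfl
  | cons a w ih =>
      show A.evalFrom (A.stepSet (⋃ i, S i) a) w = _
      rw [stepSet_iUnion, ih]
      rfl

lemma elimWild_stepSet (A : NFA (X → WildLetter σ) Q) (S : Set Q) (a : X → Option σ) :
    (elimWild A).stepSet S a =
      ⋃ a' : {a' // LetterMatches a' a}, A.stepSet S a'.1 := by
  ext q; simp [NFA.stepSet, elimWild]; tauto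

lemma elimWild_evalFrom (A : NFA (X → WildLetter σ) Q) (w : List (X → Option σ)) (S : Set Q)
    (q : Q) : q ∈ (elimWild A).evalFrom S w ↔
      ∃ w', List.Forall₂ (LetterMatches (σ := σ) (X := X)) w' w ∧ q ∈ A.evalFrom S w' := by
  induction w generalizing S with
  | nil =>
      simp only [NFA.evalFrom_nil]
      constructor
      · intro h; exact ⟨[], List.Forall₂.nil, h⟩
      · rintro ⟨w', h, hq⟩; cases h; exact hq
  | cons a w ih =>
      show q ∈ (elimWild A).evalFrom ((elimWild A).stepSet S a) w ↔ _
      rw [ih, elimWild_stepSet]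
      constructor
      · rintro ⟨w'', hf, hq⟩
        rw [evalFrom_iUnion] at hq
        obtain ⟨a', hq⟩ := Set.mem_iUnion.mp hq
        exact ⟨a'.1 :: w'', List.Forall₂.cons a'.2 hf, hq⟩
      · rintro ⟨w', hf, hq⟩
        cases hf with
        | cons ha hf =>
          rename_i a' w''
          refine ⟨w'', hf, ?_⟩
          rw [evalFrom_iUnion]
          exact Set.mem_iUnion.mpr ⟨⟨a', ha⟩, hq⟩

lemma elimWild_accepts (A : NFA (X → WildLetter σ) Q) (w : List (X → Option σ)) :
    w ∈ (elimWild A).accepts ↔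
      ∃ w' ∈ A.accepts, List.Forall₂ (LetterMatches (σ := σ) (X := X)) w' w := by
  rw [NFA.mem_accepts]
  constructor
  · rintro ⟨q, hq, hm⟩
    rw [elimWild_evalFrom] at hm
    obtain ⟨w', hf, hm⟩ := hm
    exact ⟨w', ⟨q, hq, hm⟩, hf⟩
  · rintro ⟨w', ⟨q, hq, hm⟩, hf⟩
    exact ⟨q, hq, (elimWild_evalFrom A w A.start q).mpr ⟨w', hf, hm⟩⟩

lemma elimWild_hsat [Fintype X] [DecidableEq X] (A : NFA (X → WildLetter σ) Q)
    (qs : List (Quant × X)) (S : Set (List σ)) (v : X → List σ) :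
    HSat (elimWild A).accepts qs S v ↔ HSatStar A qs S v := by
  induction qs generalizing v with
  | nil => exact elimWild_accepts A (wordAssign v)
  | cons p qs ih =>
      obtain ⟨q, x⟩ := p
      cases q with
      | ex => simp only [HSat, HSatStar]; exact exists_congr fun w => and_congr_right fun _ => ih _
      | all => simp only [HSat, HSatStar]; exact forall_congr' fun w => imp_congr_right fun _ => ih _

end Aux

/-- Wild-card elimination: every NFH with wild-card letters has an equivalent
ordinary NFH with the same variable set and the same quantifier prefix. -/
theorem nfh_wildcard_elimination {σ X Q : Type} [Fintype X] [DecidableEq X] [Fintype Q]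
    (A : NFA (X → WildLetter σ) Q) (qs : List (Quant × X)) (hbind : Binds qs) :
    ∃ (Q' : Type) (_ : Fintype Q') (B : NFA (X → Option σ) Q'),
      HLang B.accepts qs = HLangStar A qs := by
  refine ⟨Q, inferInstance, elimWild A, ?_⟩
  ext S
  simp only [HLang, HLangStar, HAccepts, Set.mem_setOf_eq, elimWild_hsat]
end
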